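/- arXiv:2107.01380 — 12 statements merged into one kernel-verified Lean document; each statement's English description precedes it below -/
import Mathlib

section
/- For every quaternion matrix A ∈ ℍ^{M×N} there exist a unitary quaternion matrix U ∈ ℍ^{M×M}, a unitary quaternion matrix V ∈ ℍ^{N×N}, and a function σ : Fin (min M N) → ℝ that is nonincreasing and satisfies σ i ≥ 0 for every i, such that A = U * D * Vᴴ, where D ∈ ℍ^{M×N} is the rectangular diagonal matrix with D i j = (σ i : ℍ) when i and j have equal numerical index and D i j = 0 otherwise. -/
noncomputable section

open Matrix

abbrev ℍ : Type := Quaternion ℝ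

/-- The `M × N` rectangular diagonal quaternion matrix of `σ : Fin K → ℝ`:
entry `(i, j)` is `σ i` when `i` and `j` have equal numerical index (below `K`), else `0`. -/
def rectDiag (M N : ℕ) {K : ℕ} (σ : Fin K → ℝ) : Matrix (Fin M) (Fin N) ℍ :=
  Matrix.of fun i j =>
    if h : (i : ℕ) = (j : ℕ) ∧ (i : ℕ) < K then ((σ ⟨i, h.2⟩ : ℝ) : ℍ) else 0

/-- A square quaternion matrix is unitary if `A * Aᴴ = Aᴴ * A = 1`. -/
def IsUnitary {n : ℕ} (A : Matrix (Fin n) (Fin n) ℍ) : Prop :=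
  A * Aᴴ = 1 ∧ Aᴴ * A = 1

/-- `IsQSVD A U σ V` : `A = U * D * Vᴴ` is a quaternion singular value decomposition of `A`,
with `U`, `V` unitary and `σ` a nonincreasing nonnegative family of singular values. -/
def IsQSVD {M N : ℕ} (A : Matrix (Fin M) (Fin N) ℍ)
    (U : Matrix (Fin M) (Fin M) ℍ) (σ : Fin (min M N) → ℝ)
    (V : Matrix (Fin N) (Fin N) ℍ) : Prop :=
  IsUnitary U ∧ IsUnitary V ∧ Antitone σ ∧ (∀ i, 0 ≤ σ i) ∧
    A = U * rectDiag M N σ * Vᴴ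

/-- `A` admits a QSVD with singular values `σ`. -/
def HasQSVD {M N : ℕ} (A : Matrix (Fin M) (Fin N) ℍ) (σ : Fin (min M N) → ℝ) : Prop :=
  ∃ U V, IsQSVD A U σ V

/-! Maximise `‖A x‖` over unit vectors `x`. At a maximiser `v`, with `s = ‖A v‖` and
`u = A v / s`, the first-order condition gives `Aᴴ u = s v`. Completing `u` and `v` to unitary
matrices (by a quaternionic Householder reflector) turns `A` into the block matrix `diag(s, A')`
with `‖A'‖ ≤ s`, and induction on the size finishes. -/

open Quaternion (normSq normSq_nonneg normSq_smul normSq_star normSq_inv normSq_eq_norm_mul_self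
  continuous_normSq star_mul_self self_mul_star self_add_star' coe_injective coe_commutes coe_mul
  coe_mul_eq_smul algebraMap_def re_star re_add re_sub re_neg re_smul re_coe re_one re_zero)

section VecNormSq

variable {ι κ : Type*} [Fintype ι] [Fintype κ]

def vecNormSq (x : ι → ℍ) : ℝ := ∑ i, normSq (x i)

theorem coe_vecNormSq (x : ι → ℍ) : (vecNormSq x : ℍ) = star x ⬝ᵥ x := by
  simp [vecNormSq, dotProduct, star_mul_self, ← algebraMap_def, map_sum]

theorem vecNormSq_nonneg (x : ι → ℍ) : 0 ≤ vecNormSq x :=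
  Finset.sum_nonneg fun _ _ => normSq_nonneg

theorem vecNormSq_eq_zero {x : ι → ℍ} : vecNormSq x = 0 ↔ x = 0 := by
  simp [vecNormSq, Finset.sum_eq_zero_iff_of_nonneg, funext_iff]

theorem continuous_vecNormSq : Continuous (vecNormSq : (ι → ℍ) → ℝ) :=
  continuous_finsetSum _ fun i _ => continuous_normSq.comp (continuous_apply i)

theorem vecNormSq_smul (t : ℝ) (x : ι → ℍ) : vecNormSq (t • x) = t ^ 2 * vecNormSq x := by
  simp [vecNormSq, normSq_smul, Finset.mul_sum]

theorem re_star_dotProduct_comm (x y : ι → ℍ) : (star x ⬝ᵥ y).re = (star y ⬝ᵥ x).re := by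
  rw [star_dotProduct, re_star]

theorem vecNormSq_add_smul (x y : ι → ℍ) (t : ℝ) :
    vecNormSq (x + t • y) = vecNormSq x + 2 * t * (star y ⬝ᵥ x).re + t ^ 2 * vecNormSq y := by
  have h := congrArg (fun q : ℍ => q.re) (coe_vecNormSq (x + t • y))
  have hs : star (t • y) = t • star y := funext fun i => Quaternion.star_smul t (y i)
  simp only [star_add, hs, add_dotProduct, dotProduct_add, smul_dotProduct, dotProduct_smul,
    re_add, re_smul, ← coe_vecNormSq, re_coe, smul_eq_mul] at h
  rw [h, re_star_dotProduct_comm x]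
  ring

theorem star_mulVec_dotProduct (A : Matrix κ ι ℍ) (x : ι → ℍ) (y : κ → ℍ) :
    star (A *ᵥ x) ⬝ᵥ y = star x ⬝ᵥ (Aᴴ *ᵥ y) := by
  rw [star_mulVec, ← dotProduct_mulVec]

theorem vecNormSq_mulVec_of_conjTranspose_mul_self {U : Matrix ι ι ℍ} [DecidableEq ι]
    (hU : Uᴴ * U = 1) (x : ι → ℍ) : vecNormSq (U *ᵥ x) = vecNormSq x := by
  apply coe_injective
  rw [coe_vecNormSq, coe_vecNormSq, star_mulVec_dotProduct, mulVec_mulVec, hU, one_mulVec]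

theorem isCompact_setOf_vecNormSq_eq_one : IsCompact {x : ι → ℍ | vecNormSq x = 1} := by
  refine Metric.isCompact_of_isClosed_isBounded
    (isClosed_singleton.preimage continuous_vecNormSq) ?_
  refine (Metric.isBounded_iff_subset_closedBall 0).2 ⟨1, fun x (hx : vecNormSq x = 1) => ?_⟩
  rw [Metric.mem_closedBall, dist_zero_right, pi_norm_le_iff_of_nonneg zero_le_one]
  intro i
  have : ‖x i‖ ^ 2 ≤ 1 := by
    rw [sq, ← normSq_eq_norm_mul_self, ← hx]
    exact Finset.single_le_sum (fun j _ => normSq_nonneg (a := x j)) (Finset.mem_univ i)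
  exact (sq_le_one_iff₀ (norm_nonneg _)).1 this

theorem exists_vecNormSq_eq_one_forall_le [Nonempty ι] (A : Matrix κ ι ℍ) :
    ∃ v, vecNormSq v = 1 ∧ ∀ x, vecNormSq (A *ᵥ x) ≤ vecNormSq (A *ᵥ v) * vecNormSq x := by
  classical
  obtain ⟨i⟩ := ‹Nonempty ι›
  have hne : vecNormSq (Pi.single i 1 : ι → ℍ) = 1 := by
    simp [vecNormSq, Pi.single_apply]
  have hcont : Continuous fun x => vecNormSq (A *ᵥ x) :=
    continuous_vecNormSq.comp (continuous_const.matrix_mulVec continuous_id)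
  obtain ⟨v, hv, hmax⟩ :=
    isCompact_setOf_vecNormSq_eq_one.exists_isMaxOn ⟨_, hne⟩ hcont.continuousOn
  refine ⟨v, hv, fun x => ?_⟩
  obtain hx | hx := (vecNormSq_nonneg x).eq_or_lt
  · rw [eq_comm, vecNormSq_eq_zero] at hx
    simp [hx, vecNormSq]
  set r := √(vecNormSq x)
  have hr : 0 < r := Real.sqrt_pos.2 hx
  have hx' : x = r • r⁻¹ • x := by rw [smul_smul, mul_inv_cancel₀ hr.ne', one_smul]
  have hunit : vecNormSq (r⁻¹ • x) = 1 := by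
    rw [vecNormSq_smul, inv_pow, Real.sq_sqrt hx.le, inv_mul_cancel₀ hx.ne']
  have hle : vecNormSq (A *ᵥ (r⁻¹ • x)) ≤ vecNormSq (A *ᵥ v) := hmax hunit
  rw [hx', mulVec_smul, vecNormSq_smul, vecNormSq_smul, hunit, mul_one, mul_comm]
  exact mul_le_mul_of_nonneg_right hle (sq_nonneg r)

theorem conjTranspose_mulVec_mulVec_eq_of_le (A : Matrix κ ι ℍ) {v : ι → ℍ} {μ : ℝ}
    (hv : vecNormSq (A *ᵥ v) = μ * vecNormSq v)
    (hle : ∀ x, vecNormSq (A *ᵥ x) ≤ μ * vecNormSq x) :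
    Aᴴ *ᵥ (A *ᵥ v) = μ • v := by
  -- `t ↦ μ ‖v + t w‖² - ‖A (v + t w)‖²` is a nonnegative quadratic vanishing at `0`,
  -- so its linear coefficient vanishes.
  have horth : ∀ w, (star w ⬝ᵥ (Aᴴ *ᵥ (A *ᵥ v) - μ • v)).re = 0 := by
    intro w
    have hquad : ∀ t : ℝ, 0 ≤ (μ * vecNormSq w - vecNormSq (A *ᵥ w)) * (t * t)
        + (-2 * (star w ⬝ᵥ (Aᴴ *ᵥ (A *ᵥ v) - μ • v)).re) * t + 0 := by
      intro t
      have h := hle (v + t • w)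
      rw [mulVec_add, mulVec_smul, vecNormSq_add_smul, vecNormSq_add_smul, hv,
        star_mulVec_dotProduct] at h
      simp only [dotProduct_sub, dotProduct_smul, re_sub, re_smul, smul_eq_mul]
      nlinarith
    have := discrim_le_zero hquad
    rw [discrim] at this
    nlinarith
  have := horth (Aᴴ *ᵥ (A *ᵥ v) - μ • v)
  rwa [← coe_vecNormSq, re_coe, vecNormSq_eq_zero, sub_eq_zero] at this

theorem exists_singular_pair (A : Matrix κ ι ℍ) (hA : A ≠ 0) :
    ∃ s > 0, ∃ u v, vecNormSq u = 1 ∧ vecNormSq v = 1 ∧ A *ᵥ v = s • u ∧ Aᴴ *ᵥ u = s • v ∧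
      ∀ x, vecNormSq (A *ᵥ x) ≤ s ^ 2 * vecNormSq x := by
  have : Nonempty ι := by
    by_contra h
    exact hA (Matrix.ext fun _ j => (not_nonempty_iff.1 h).elim j)
  obtain ⟨v, hv, hle⟩ := exists_vecNormSq_eq_one_forall_le A
  set μ := vecNormSq (A *ᵥ v)
  have hμ : 0 < μ := by
    refine (vecNormSq_nonneg _).lt_of_ne fun h => hA (Matrix.ext_iff_mulVec.2 fun x => ?_)
    have h0 : vecNormSq (A *ᵥ x) = 0 :=
      le_antisymm ((hle x).trans_eq (by simp [μ, ← h])) (vecNormSq_nonneg _)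
    simpa using vecNormSq_eq_zero.1 h0
  set s := √μ
  have hs : 0 < s := Real.sqrt_pos.2 hμ
  have hs2 : s ^ 2 = μ := Real.sq_sqrt hμ.le
  have heig := conjTranspose_mulVec_mulVec_eq_of_le A (by rw [hv, mul_one]) hle
  refine ⟨s, hs, s⁻¹ • (A *ᵥ v), v, ?_, hv, ?_, ?_, by rwa [hs2]⟩
  · rw [vecNormSq_smul, inv_pow, hs2, inv_mul_cancel₀ hμ.ne']
  · rw [smul_smul, mul_inv_cancel₀ hs.ne', one_smul]
  · rw [mulVec_smul, heig, smul_smul, ← hs2, sq, inv_mul_cancel_left₀ hs.ne']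

end VecNormSq

section Unitary

variable {n : ℕ}

theorem isUnitary_iff_mem_unitary {U : Matrix (Fin n) (Fin n) ℍ} :
    IsUnitary U ↔ U ∈ unitary (Matrix (Fin n) (Fin n) ℍ) := by
  rw [IsUnitary, Unitary.mem_iff, and_comm]
  rfl

theorem isUnitary_one : IsUnitary (1 : Matrix (Fin n) (Fin n) ℍ) :=
  isUnitary_iff_mem_unitary.2 (one_mem _)

theorem IsUnitary.mul {U V : Matrix (Fin n) (Fin n) ℍ} (hU : IsUnitary U) (hV : IsUnitary V) :
    IsUnitary (U * V) :=
  isUnitary_iff_mem_unitary.2 (mul_mem (isUnitary_iff_mem_unitary.1 hU)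
    (isUnitary_iff_mem_unitary.1 hV))

theorem IsUnitary.neg {U : Matrix (Fin n) (Fin n) ℍ} (hU : IsUnitary U) : IsUnitary (-U) :=
  ⟨by simpa using hU.1, by simpa using hU.2⟩

theorem IsUnitary.conjTranspose {U : Matrix (Fin n) (Fin n) ℍ} (hU : IsUnitary U) :
    IsUnitary Uᴴ := by
  rw [IsUnitary, conjTranspose_conjTranspose]
  exact hU.symm

theorem IsUnitary.vecNormSq_mulVec {U : Matrix (Fin n) (Fin n) ℍ} (hU : IsUnitary U)
    (x : Fin n → ℍ) : vecNormSq (U *ᵥ x) = vecNormSq x :=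
  vecNormSq_mulVec_of_conjTranspose_mul_self hU.2 x

end Unitary

section Reflector

variable {α ι : Type*} [Ring α] [StarRing α]

def outer (w : ι → α) (q : α) : Matrix ι ι α :=
  of fun i j => w i * q * star (w j)

theorem conjTranspose_outer (w : ι → α) (q : α) : (outer w q)ᴴ = outer w (star q) := by
  ext i j
  simp [outer, mul_assoc]

theorem outer_zero (w : ι → α) : outer w 0 = 0 := by
  ext i j
  simp [outer]

variable [Fintype ι]

theorem outer_mul_outer (w : ι → α) (p q : α) :
    outer w p * outer w q = outer w (p * (star w ⬝ᵥ w) * q) := by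
  ext i j
  simp only [outer, mul_apply, of_apply, dotProduct, Pi.star_apply, Finset.mul_sum,
    Finset.sum_mul, mul_assoc]

theorem one_sub_outer_mul_one_sub_outer [DecidableEq ι] (w : ι → α) (p q : α) :
    (1 - outer w p) * (1 - outer w q) = 1 - outer w (p + q - p * (star w ⬝ᵥ w) * q) := by
  rw [sub_mul, mul_sub, mul_sub, outer_mul_outer]
  ext i j
  simp only [outer, Matrix.sub_apply, one_mul, mul_one, of_apply, add_mul, mul_add, sub_mul,
    mul_sub]
  abel

end Reflector

theorem isUnitary_one_sub_outer {n : ℕ} (w : Fin n → ℍ) (τ : ℍ)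
    (h : 2 * τ.re = vecNormSq w * normSq τ) : IsUnitary (1 - outer w τ) := by
  have key : ∀ q : ℍ, 2 * q.re = vecNormSq w * normSq q →
      q + star q - q * (star w ⬝ᵥ w) * star q = 0 := by
    intro q hq
    rw [← coe_vecNormSq, ← coe_commutes, mul_assoc, self_mul_star, self_add_star', ← coe_mul,
      hq, sub_self]
  have key' := key (star τ) (by rwa [re_star, normSq_star])
  rw [star_star] at key'
  rw [IsUnitary, conjTranspose_sub, conjTranspose_one, conjTranspose_outer,
    one_sub_outer_mul_one_sub_outer, one_sub_outer_mul_one_sub_outer, key τ h, key', outer_zero,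
    sub_zero]
  exact ⟨rfl, rfl⟩

-- With `w = e₀ - v`, the reflector `1 - w (w̄₀)⁻¹ wᴴ` maps `e₀` to `v`; passing to `-v` if
-- necessary makes `w₀ ≠ 0`.
theorem exists_isUnitary_mulVec_single_zero {n : ℕ} (v : Fin (n + 1) → ℍ)
    (hv : vecNormSq v = 1) : ∃ U, IsUnitary U ∧ U *ᵥ Pi.single 0 1 = v := by
  wlog h : (v 0).re ≠ 1 generalizing v
  · obtain ⟨U, hU, hUv⟩ := this (-v)
      (by rwa [← neg_one_smul ℝ v, vecNormSq_smul, neg_one_sq, one_mul])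
      (by rw [Pi.neg_apply, re_neg, not_not.1 h]; norm_num)
    exact ⟨-U, hU.neg, by rw [neg_mulVec, hUv, neg_neg]⟩
  set w : Fin (n + 1) → ℍ := Pi.single 0 1 - v
  have hre : (star (w 0)).re = 1 - (v 0).re := by simp [w, re_one]
  have hβ : star (w 0) ≠ 0 := by
    intro h0
    rw [h0, re_zero] at hre
    exact h (by linarith)
  have hw : vecNormSq w = 2 * (star (w 0)).re := by
    have := vecNormSq_add_smul (Pi.single 0 1) v (-1)
    simp only [neg_one_smul, ← sub_eq_add_neg, hv] at this
    rw [this, hre]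
    simp [vecNormSq, Pi.single_apply, dotProduct]
    ring
  refine ⟨1 - outer w (star (w 0))⁻¹, isUnitary_one_sub_outer w _ ?_, ?_⟩
  · rw [hw, normSq_inv, Quaternion.inv_def, re_smul, re_star, smul_eq_mul]
    ring
  · ext1 i
    rw [sub_mulVec, one_mulVec, mulVec_single_one]
    simp only [Pi.sub_apply, col_apply, outer, of_apply, mul_assoc, inv_mul_cancel₀ hβ,
      mul_one]
    simp [w]

section DiagCons

variable {α : Type*} {m n p : ℕ}

def diagCons [Zero α] (c : α) (B : Matrix (Fin m) (Fin n) α) :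
    Matrix (Fin (m + 1)) (Fin (n + 1)) α :=
  of (vecCons (vecCons c 0) fun i => vecCons 0 (B i))

theorem diagCons_mul [Semiring α] (a b : α) (B : Matrix (Fin m) (Fin n) α)
    (C : Matrix (Fin n) (Fin p) α) : diagCons a B * diagCons b C = diagCons (a * b) (B * C) := by
  ext i j
  refine Fin.cases ?_ (fun i => ?_) i <;> refine Fin.cases ?_ (fun j => ?_) j <;>
    simp [diagCons, mul_apply, Fin.sum_univ_succ]

theorem conjTranspose_diagCons [Semiring α] [StarRing α] (c : α)
    (B : Matrix (Fin m) (Fin n) α) : (diagCons c B)ᴴ = diagCons (star c) Bᴴ := by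
  ext i j
  refine Fin.cases ?_ (fun i => ?_) i <;> refine Fin.cases ?_ (fun j => ?_) j <;>
    simp [diagCons]

theorem diagCons_one_one [Semiring α] : diagCons (1 : α) (1 : Matrix (Fin m) (Fin m) α) = 1 := by
  ext i j
  refine Fin.cases ?_ (fun i => ?_) i <;> refine Fin.cases ?_ (fun j => ?_) j <;>
    simp [diagCons, one_apply, Fin.succ_ne_zero, (Fin.succ_ne_zero _).symm]

theorem diagCons_mulVec_cons [Semiring α] (c a : α) (B : Matrix (Fin m) (Fin n) α)
    (x : Fin n → α) : diagCons c B *ᵥ Fin.cons a x = Fin.cons (c * a) (B *ᵥ x) := by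
  ext i
  refine Fin.cases ?_ (fun i => ?_) i <;>
    simp [diagCons, mulVec, dotProduct, Fin.sum_univ_succ]

end DiagCons

theorem IsUnitary.diagCons_one {n : ℕ} {U : Matrix (Fin n) (Fin n) ℍ} (hU : IsUnitary U) :
    IsUnitary (diagCons 1 U) := by
  rw [IsUnitary, conjTranspose_diagCons, diagCons_mul, diagCons_mul, hU.1, hU.2, star_one,
    mul_one, diagCons_one_one]
  exact ⟨rfl, rfl⟩

theorem vecNormSq_cons {n : ℕ} (a : ℍ) (x : Fin n → ℍ) :
    vecNormSq (Fin.cons a x : Fin (n + 1) → ℍ) = normSq a + vecNormSq x := by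
  simp [vecNormSq, Fin.sum_univ_succ]

theorem eq_diagCons_of_mulVec_single_zero {m n : ℕ} (C : Matrix (Fin (m + 1)) (Fin (n + 1)) ℍ)
    (s : ℝ) (hcol : C *ᵥ Pi.single 0 1 = s • Pi.single 0 1)
    (hrow : Cᴴ *ᵥ Pi.single 0 1 = s • Pi.single 0 1) :
    C = diagCons (s : ℍ) (C.submatrix Fin.succ Fin.succ) := by
  rw [mulVec_single_one] at hcol hrow
  refine Matrix.ext fun i j => ?_
  refine Fin.cases ?_ (fun i => ?_) i <;> refine Fin.cases ?_ (fun j => ?_) j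
  · simpa [diagCons, ← coe_mul_eq_smul] using congrFun hcol 0
  · simpa [diagCons] using congrFun hrow j.succ
  · simpa [diagCons] using congrFun hcol i.succ
  · simp [diagCons]

theorem conjTranspose_mul_mul_mulVec_single {ι κ : Type*} [Fintype ι] [DecidableEq ι]
    [Fintype κ] [DecidableEq κ] {U : Matrix κ κ ℍ} {B : Matrix κ ι ℍ} {V : Matrix ι ι ℍ} {u : κ → ℍ}
    {v : ι → ℍ} {s : ℝ} {i : ι} {k : κ} (hU : Uᴴ * U = 1) (hUu : U *ᵥ Pi.single k 1 = u)
    (hVv : V *ᵥ Pi.single i 1 = v) (hB : B *ᵥ v = s • u) :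
    (Uᴴ * B * V) *ᵥ Pi.single i 1 = s • Pi.single k 1 := by
  rw [← mulVec_mulVec, ← mulVec_mulVec, hVv, hB, mulVec_smul, ← hUu, mulVec_mulVec, hU,
    one_mulVec]

theorem exists_diagCons_of_singular_pair {m n : ℕ} (A : Matrix (Fin (m + 1)) (Fin (n + 1)) ℍ)
    {s : ℝ} {u : Fin (m + 1) → ℍ} {v : Fin (n + 1) → ℍ} (hu : vecNormSq u = 1)
    (hv : vecNormSq v = 1) (hAv : A *ᵥ v = s • u) (hAu : Aᴴ *ᵥ u = s • v)
    (hA : ∀ x, vecNormSq (A *ᵥ x) ≤ s ^ 2 * vecNormSq x) :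
    ∃ (U : Matrix (Fin (m + 1)) (Fin (m + 1)) ℍ) (V : Matrix (Fin (n + 1)) (Fin (n + 1)) ℍ)
      (A' : Matrix (Fin m) (Fin n) ℍ), IsUnitary U ∧ IsUnitary V ∧
      A = U * diagCons (s : ℍ) A' * Vᴴ ∧ ∀ x, vecNormSq (A' *ᵥ x) ≤ s ^ 2 * vecNormSq x := by
  obtain ⟨U, hU, hUu⟩ := exists_isUnitary_mulVec_single_zero u hu
  obtain ⟨V, hV, hVv⟩ := exists_isUnitary_mulVec_single_zero v hv
  set C := Uᴴ * A * V
  set A' := C.submatrix Fin.succ Fin.succ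
  have hC : C = diagCons (s : ℍ) A' := by
    refine eq_diagCons_of_mulVec_single_zero C s
      (conjTranspose_mul_mul_mulVec_single hU.2 hUu hVv hAv) ?_
    rw [show Cᴴ = Vᴴ * Aᴴ * U by simp [C, Matrix.mul_assoc]]
    exact conjTranspose_mul_mul_mulVec_single hV.2 hVv hUu hAu
  refine ⟨U, V, A', hU, hV, ?_, fun x => ?_⟩
  · rw [← hC, Matrix.mul_assoc, Matrix.mul_assoc, hV.1, Matrix.mul_one, ← Matrix.mul_assoc,
      hU.1, Matrix.one_mul]
  have hcons : C *ᵥ Fin.cons 0 x = Fin.cons 0 (A' *ᵥ x) := by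
    rw [hC, diagCons_mulVec_cons, mul_zero]
  calc vecNormSq (A' *ᵥ x) = vecNormSq (C *ᵥ Fin.cons 0 x) := by
        rw [hcons, vecNormSq_cons, map_zero, zero_add]
    _ = vecNormSq (A *ᵥ (V *ᵥ Fin.cons 0 x)) := by
        rw [← mulVec_mulVec, ← mulVec_mulVec, hU.conjTranspose.vecNormSq_mulVec]
    _ ≤ s ^ 2 * vecNormSq x := by
        simpa [hV.vecNormSq_mulVec, vecNormSq_cons] using hA (V *ᵥ Fin.cons 0 x)

theorem rectDiag_comp_cast {M N K K' : ℕ} (σ : Fin K → ℝ) (h : K' = K) :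
    rectDiag M N (σ ∘ Fin.cast h) = rectDiag M N σ := by
  subst h
  rfl

theorem rectDiag_cons {M N K : ℕ} (s : ℝ) (σ : Fin K → ℝ) :
    rectDiag (M + 1) (N + 1) (Fin.cons s σ) = diagCons (s : ℍ) (rectDiag M N σ) := by
  refine Matrix.ext fun i j => ?_
  refine Fin.cases ?_ (fun i => ?_) i <;> refine Fin.cases ?_ (fun j => ?_) j <;>
    simp [rectDiag, diagCons]
  split_ifs <;> rfl

theorem rectDiag_zero {M N K : ℕ} : rectDiag M N (0 : Fin K → ℝ) = 0 := by
  refine Matrix.ext fun i j => ?_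
  simp [rectDiag]

theorem Fin.antitone_cons {α : Type*} [Preorder α] {n : ℕ} {a : α} {f : Fin n → α}
    (hf : Antitone f) (ha : ∀ i, f i ≤ a) : Antitone (Fin.cons a f : Fin (n + 1) → α) :=
  antitone_iff_forall_lt.2 ((Fin.liftFun_cons (· ≥ ·)).2 ⟨ha, antitone_iff_forall_lt.1 hf⟩)

theorem isQSVD_zero {M N : ℕ} :
    IsQSVD (0 : Matrix (Fin M) (Fin N) ℍ) 1 0 1 :=
  ⟨isUnitary_one, isUnitary_one, antitone_const, fun _ => le_rfl, by simp [rectDiag_zero]⟩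

theorem IsQSVD.mul_diagCons_mul {m n : ℕ} {A' : Matrix (Fin m) (Fin n) ℍ}
    {U' : Matrix (Fin m) (Fin m) ℍ} {σ' : Fin (min m n) → ℝ} {V' : Matrix (Fin n) (Fin n) ℍ}
    (h : IsQSVD A' U' σ' V') {U : Matrix (Fin (m + 1)) (Fin (m + 1)) ℍ}
    {V : Matrix (Fin (n + 1)) (Fin (n + 1)) ℍ} (hU : IsUnitary U) (hV : IsUnitary V) {s : ℝ}
    (hs : 0 ≤ s) (hσ' : ∀ i, σ' i ≤ s) :
    IsQSVD (U * diagCons (s : ℍ) A' * Vᴴ) (U * diagCons 1 U')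
      (Fin.cons s σ' ∘ Fin.cast (Nat.succ_min_succ m n)) (V * diagCons 1 V') := by
  obtain ⟨hU', hV', hanti, hnonneg, rfl⟩ := h
  refine ⟨hU.mul hU'.diagCons_one, hV.mul hV'.diagCons_one,
    (Fin.antitone_cons hanti hσ').comp_monotone
      (Fin.castOrderIso (Nat.succ_min_succ m n)).monotone, fun i => ?_, ?_⟩
  · rw [Function.comp_apply]
    cases i.cast (Nat.succ_min_succ m n) using Fin.cases with
    | zero => exact hs
    | succ j => exact hnonneg j
  rw [rectDiag_comp_cast, rectDiag_cons, conjTranspose_mul, conjTranspose_diagCons, star_one,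
    show diagCons (s : ℍ) (U' * rectDiag m n σ' * V'ᴴ) =
      diagCons 1 U' * diagCons (s : ℍ) (rectDiag m n σ') * diagCons 1 V'ᴴ by
        rw [diagCons_mul, diagCons_mul, one_mul, mul_one]]
  simp only [Matrix.mul_assoc]

-- Carrying the bound `σ ≤ c` through the induction is what makes `Fin.cons s σ'` antitone.
theorem exists_isQSVD_forall_le {M N : ℕ} (A : Matrix (Fin M) (Fin N) ℍ) :
    ∃ U σ V, IsQSVD A U σ V ∧ ∀ c, 0 ≤ c → (∀ x, vecNormSq (A *ᵥ x) ≤ c ^ 2 * vecNormSq x) →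
      ∀ i, σ i ≤ c := by
  induction M generalizing N with
  | zero =>
    obtain rfl : A = 0 := Matrix.ext fun i => i.elim0
    exact ⟨1, 0, 1, isQSVD_zero, fun c hc _ _ => hc⟩
  | succ m ih =>
    obtain rfl | hA := eq_or_ne A 0
    · exact ⟨1, 0, 1, isQSVD_zero, fun c hc _ _ => hc⟩
    cases N with
    | zero => exact absurd (Matrix.ext fun _ j => j.elim0) hA
    | succ n =>
    obtain ⟨s, hs, u, v, hu, hv, hAv, hAu, hbound⟩ := exists_singular_pair A hA
    obtain ⟨U, V, A', hU, hV, hA_eq, hA'⟩ :=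
      exists_diagCons_of_singular_pair A hu hv hAv hAu hbound
    obtain ⟨U', σ', V', hsvd, hσ'⟩ := ih A'
    have hσ's := hσ' s hs.le hA'
    refine ⟨_, _, _, hA_eq ▸ hsvd.mul_diagCons_mul hU hV hs.le hσ's, fun c hc hAc i => ?_⟩
    have hsc : s ≤ c := by
      have := hAc v
      rw [hAv, vecNormSq_smul, hu, hv] at this
      nlinarith
    rw [Function.comp_apply]
    cases i.cast (Nat.succ_min_succ m n) using Fin.cases with
    | zero => exact hsc
    | succ j => exact (hσ's j).trans hsc

/-- Every quaternion matrix admits a quaternion singular value decomposition. -/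
theorem qsvd_exists {M N : ℕ} (A : Matrix (Fin M) (Fin N) ℍ) :
    ∃ (U : Matrix (Fin M) (Fin M) ℍ) (σ : Fin (min M N) → ℝ)
      (V : Matrix (Fin N) (Fin N) ℍ), IsQSVD A U σ V :=
  let ⟨U, σ, V, h, _⟩ := exists_isQSVD_forall_le A
  ⟨U, σ, V, h⟩
end
end

section
/- Let X ∈ ℍ^{M×N} admit a QSVD X = U * D * Vᴴ with singular values σ, and let d be a natural number such that σ i = 0 for every index i whose numerical value is at least d (i.e. X has at most d nonzero singular values). Then there exist quaternion matrices U' ∈ ℍ^{M×d} and V' ∈ ℍ^{N×d} such that X = U' * (V')ᴴ. -/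
noncomputable section

open Matrix

theorem rectDiag_mul_conjTranspose_rectDiag_one {M N K d : ℕ} (σ : Fin K → ℝ)
    (hσ : ∀ i : Fin K, d ≤ (i : ℕ) → σ i = 0) :
    rectDiag M d σ * (rectDiag N d fun _ : Fin K => 1)ᴴ = rectDiag M N σ := by
  refine Matrix.ext fun ⟨i, _⟩ ⟨j, _⟩ => ?_
  simp only [mul_apply, conjTranspose_apply, rectDiag, of_apply]
  by_cases hid : i < d
  · rw [Finset.sum_eq_single ⟨i, hid⟩
      (fun k _ hk => by rw [dif_neg fun h => hk (Fin.ext h.1.symm), zero_mul]) (by simp)]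
    by_cases hij : i = j
    · subst hij
      by_cases hiK : i < K <;> simp [hiK]
    · simp [hij, Ne.symm hij]
  · rw [Finset.sum_eq_zero fun k _ => by simp [show i ≠ k by omega]]
    split_ifs with h
    · simp [hσ ⟨i, h.2⟩ (not_lt.1 hid)]
    · rfl

/-- Binary factorization: if `X` has at most `d` nonzero singular values then
`X = U' * V'ᴴ` for some `U' : ℍ^{M×d}`, `V' : ℍ^{N×d}`. -/
theorem qsvd_binary_factorization {M N d : ℕ} (X : Matrix (Fin M) (Fin N) ℍ)
    (U : Matrix (Fin M) (Fin M) ℍ) (σ : Fin (min M N) → ℝ)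
    (V : Matrix (Fin N) (Fin N) ℍ) (hX : IsQSVD X U σ V)
    (hd : ∀ i : Fin (min M N), d ≤ (i : ℕ) → σ i = 0) :
    ∃ (U' : Matrix (Fin M) (Fin d) ℍ) (V' : Matrix (Fin N) (Fin d) ℍ),
      X = U' * V'ᴴ := by
  obtain ⟨-, -, -, -, rfl⟩ := hX
  refine ⟨U * rectDiag M d σ, V * rectDiag N d fun _ : Fin (min M N) => 1, ?_⟩
  rw [← rectDiag_mul_conjTranspose_rectDiag_one σ hd, conjTranspose_mul,
    Matrix.mul_assoc, Matrix.mul_assoc, Matrix.mul_assoc]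
end
end

section
/- Let X ∈ ℍ^{M×N} admit a QSVD with singular values σ : Fin m → ℝ, where m = min(M, N). Then there exist quaternion matrices U ∈ ℍ^{M×m} and V ∈ ℍ^{N×m} such that X = U * Vᴴ and both U and V admit QSVDs whose singular values are the function i ↦ √(σ i); consequently, for every ε > 0, 2 · Σ_{i=1}^{m} log(√(σ i) + ε) = Σ_{i=1}^{m} log(√(σ i) + ε) + Σ_{i=1}^{m} log(√(σ i) + ε), i.e. the bi-factor logarithmic surrogate ½(‖U‖_L^1 + ‖V‖_L^1) attains the value ‖X‖_L^{1/2}. -/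
noncomputable section

open Matrix

lemma rectDiag_cast (M N : ℕ) {K K' : ℕ} (h : K' = K) (σ : Fin K → ℝ) :
    rectDiag M N (fun i : Fin K' => σ (Fin.cast h i)) = rectDiag M N σ := by
  subst h; rfl

lemma rectDiag_mul_conjTranspose (M N K : ℕ) (s t : Fin K → ℝ) :
    rectDiag M K s * (rectDiag N K t)ᴴ = rectDiag M N (fun i => s i * t i) := by
  apply Matrix.ext
  intro i j
  simp only [Matrix.mul_apply, conjTranspose_apply, rectDiag, of_apply]
  by_cases h : (i : ℕ) = (j : ℕ) ∧ (i : ℕ) < K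
  · obtain ⟨hij, hi⟩ := h
    rw [dif_pos ⟨hij, hi⟩]
    rw [Finset.sum_eq_single (⟨i, hi⟩ : Fin K)]
    · rw [dif_pos ⟨rfl, hi⟩, dif_pos ⟨hij.symm, hij ▸ hi⟩]
      have : (⟨(j : ℕ), hij ▸ hi⟩ : Fin K) = ⟨(i : ℕ), hi⟩ := by ext; exact hij.symm
      rw [this]
      simp [Quaternion.star_coe, ← Quaternion.coe_mul]
    · intro k _ hk
      rw [dif_neg, zero_mul]
      rintro ⟨hik, -⟩
      exact hk (by ext; exact hik.symm)
    · simp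
  · rw [dif_neg h]
    apply Finset.sum_eq_zero
    intro k _
    by_cases hik : (i : ℕ) = (k : ℕ)
    · have hnc : ¬((j : ℕ) = (k : ℕ) ∧ (j : ℕ) < K) := fun hh =>
        h ⟨hik.trans hh.1.symm, hik ▸ k.isLt⟩
      rw [dif_neg hnc]
      simp
    · rw [dif_neg (fun hh => hik hh.1), zero_mul]

/-- The bi-factor logarithmic surrogate attains `‖X‖_L^{1/2}`: `X` factors as `U * Vᴴ`
where both factors have singular values `i ↦ √(σ i)`, and the corresponding logarithmic
norms satisfy `2 ‖X‖_L^{1/2} = ‖U‖_L^1 + ‖V‖_L^1` for every `ε > 0`. -/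
theorem qln_bifactor_attained {M N : ℕ} (X : Matrix (Fin M) (Fin N) ℍ)
    (σ : Fin (min M N) → ℝ) (hX : HasQSVD X σ) :
    ∃ (U : Matrix (Fin M) (Fin (min M N)) ℍ) (V : Matrix (Fin N) (Fin (min M N)) ℍ),
      X = U * Vᴴ ∧
      (HasQSVD U fun i => Real.sqrt (σ (Fin.cast (min_eq_right (min_le_left M N)) i))) ∧
      (HasQSVD V fun i => Real.sqrt (σ (Fin.cast (min_eq_right (min_le_right M N)) i))) ∧
      ∀ ε : ℝ, 0 < ε →
        2 * ∑ i, Real.log (Real.sqrt (σ i) + ε) =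
          (∑ i, Real.log (Real.sqrt (σ i) + ε)) +
            ∑ i, Real.log (Real.sqrt (σ i) + ε) := by
  obtain ⟨U₀, V₀, hUu, hVu, hanti, hnn, hfact⟩ := hX
  have sqa : ∀ {K : ℕ} (h : K = min M N),
      Antitone (fun i : Fin K => Real.sqrt (σ (Fin.cast h i))) := by
    intro K h i j hij
    exact Real.sqrt_le_sqrt (hanti hij)
  refine ⟨U₀ * rectDiag M (min M N) (fun i => Real.sqrt (σ i)),
          V₀ * rectDiag N (min M N) (fun i => Real.sqrt (σ i)), ?_, ?_, ?_, ?_⟩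
  · have key : rectDiag M (min M N) (fun i => Real.sqrt (σ i)) *
        (rectDiag N (min M N) (fun i => Real.sqrt (σ i)))ᴴ = rectDiag M N σ := by
      rw [rectDiag_mul_conjTranspose]
      have : (fun i => Real.sqrt (σ i) * Real.sqrt (σ i)) = σ :=
        funext fun i => Real.mul_self_sqrt (hnn i)
      rw [this]
    rw [conjTranspose_mul, hfact, ← key]
    simp only [Matrix.mul_assoc]
  · refine ⟨U₀, 1, hUu,
      ⟨by rw [conjTranspose_one, Matrix.mul_one], by rw [conjTranspose_one, Matrix.mul_one]⟩,
      sqa _, fun i => Real.sqrt_nonneg _, ?_⟩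
    rw [conjTranspose_one, Matrix.mul_one,
      rectDiag_cast M (min M N) (min_eq_right (min_le_left M N)) (fun i => Real.sqrt (σ i))]
  · refine ⟨V₀, 1, hVu,
      ⟨by rw [conjTranspose_one, Matrix.mul_one], by rw [conjTranspose_one, Matrix.mul_one]⟩,
      sqa _, fun i => Real.sqrt_nonneg _, ?_⟩
    rw [conjTranspose_one, Matrix.mul_one,
      rectDiag_cast N (min M N) (min_eq_right (min_le_right M N)) (fun i => Real.sqrt (σ i))]
  · intro ε _; ring
end
end

section
/- Let λ > 0, ε > 0, and let Y ∈ ℍ^{M×N} admit a QSVD Y = U * Λ * Vᴴ with singular values y : Fin m → ℝ, where m = min(M, N). For each i set Δ i = (y i − ε)² − 4(λ − (y i)·ε) and h_i(a) = ½(a − y i)² + λ·log(a + ε). Let a : Fin m → ℝ satisfy: a i ≥ 0 for all i; a i = 0 whenever Δ i ≤ 0; and whenever Δ i > 0, a i ∈ {0, ½(y i − ε + √(Δ i))} with h_i(a i) ≤ h_i(b) for the other element b of that two-element set. Then the quaternion matrix X̂ = U * Â * Vᴴ, where Â ∈ ℍ^{M×N} is the rectangular diagonal matrix of a, is a global minimizer: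 for every X ∈ ℍ^{M×N} admitting a QSVD with singular values x : Fin m → ℝ, one has ½·Σ_{i,j} ‖Y i j − X̂ i j‖² + λ·Σ_{i=1}^{m} log(a i + ε) ≤ ½·Σ_{i,j} ‖Y i j − X i j‖² + λ·Σ_{i=1}^{m} log(x i + ε). -/
/-!
The objective splits into a matrix term and a sum of scalar terms.

Matrix term: if `X` has singular values `x`, the von Neumann trace inequality
`Re tr (Y Xᴴ) ≤ ∑ yₖ xₖ` gives `‖Y - X‖_F² ≥ ∑ (yₖ - xₖ)²`, with equality for `X̂`, which shares
its singular vectors with `Y`. After moving the unitary factors across,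
`Re tr (Y Xᴴ) = ∑ₖₗ yₖ xₗ Re (Pₖₗ Qₗₖ)` with `P`, `Q` unitary, and `Re (Pₖₗ Qₗₖ)` is at most the
entry `Sₖₗ = (‖Pₖₗ‖² + ‖Qₗₖ‖²) / 2` of a doubly substochastic matrix. For nonincreasing nonnegative
`y`, `x` the form `∑ yₖ xₗ Sₖₗ` is at most `∑ yₖ xₖ`: on every prefix `{k ≤ k₀}` this is a bathtub
estimate, and Abel summation in `y` assembles the prefixes.

Scalar terms: it remains to see that `aₖ` minimises `hₖ` on `[0, ∞)`. The derivative of `hₖ` has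
the sign of `(t - yₖ)(t + ε) + λ`, a quadratic of discriminant `Δₖ`. If `Δₖ ≤ 0`, `hₖ` increases
and `0` is optimal; otherwise `hₖ` increases, decreases down to the larger root
`(yₖ - ε + √Δₖ) / 2` and increases again, so the minimum over `[0, ∞)` is at `0` or at that root.
-/

noncomputable section

open Matrix

def logObjective (lam ε y t : ℝ) : ℝ := 1 / 2 * (t - y) ^ 2 + lam * Real.log (t + ε)

section Scalar

variable {lam ε y : ℝ}

lemma hasDerivAt_logObjective {t : ℝ} (ht : -ε < t) :
    HasDerivAt (logObjective lam ε y) (((t - y) * (t + ε) + lam) / (t + ε)) t := by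
  have hpos : t + ε ≠ 0 := by linarith
  refine (((((hasDerivAt_id t).sub_const y).pow 2).const_mul (1 / 2 : ℝ)).add
    ((((hasDerivAt_id t).add_const ε).log hpos).const_mul lam)).congr_deriv ?_
  simp only [id]
  field_simp
  ring

lemma logObjective_le_of_numerator_nonneg {s t : ℝ} (hs : -ε < s) (hst : s ≤ t)
    (hq : ∀ u ∈ Set.Icc s t, 0 ≤ (u - y) * (u + ε) + lam) :
    logObjective lam ε y s ≤ logObjective lam ε y t := by
  have hderiv : ∀ u ∈ Set.Icc s t, HasDerivAt (logObjective lam ε y)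
      (((u - y) * (u + ε) + lam) / (u + ε)) u :=
    fun u hu => hasDerivAt_logObjective (hs.trans_le hu.1)
  refine monotoneOn_of_hasDerivWithinAt_nonneg (convex_Icc s t)
    (fun u hu => (hderiv u hu).continuousAt.continuousWithinAt)
    (fun u hu => (hderiv u (interior_subset hu)).hasDerivWithinAt)
    (fun u hu => div_nonneg (hq u (interior_subset hu)) ?_)
    (Set.left_mem_Icc.2 hst) (Set.right_mem_Icc.2 hst) hst
  linarith [(interior_subset hu : u ∈ Set.Icc s t).1]

lemma logObjective_le_of_numerator_nonpos {s t : ℝ} (hs : -ε < s) (hst : s ≤ t)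
    (hq : ∀ u ∈ Set.Icc s t, (u - y) * (u + ε) + lam ≤ 0) :
    logObjective lam ε y t ≤ logObjective lam ε y s := by
  have hderiv : ∀ u ∈ Set.Icc s t, HasDerivAt (logObjective lam ε y)
      (((u - y) * (u + ε) + lam) / (u + ε)) u :=
    fun u hu => hasDerivAt_logObjective (hs.trans_le hu.1)
  refine antitoneOn_of_hasDerivWithinAt_nonpos (convex_Icc s t)
    (fun u hu => (hderiv u hu).continuousAt.continuousWithinAt)
    (fun u hu => (hderiv u (interior_subset hu)).hasDerivWithinAt)
    (fun u hu => div_nonpos_of_nonpos_of_nonneg (hq u (interior_subset hu)) ?_)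
    (Set.left_mem_Icc.2 hst) (Set.right_mem_Icc.2 hst) hst
  linarith [(interior_subset hu : u ∈ Set.Icc s t).1]

variable {Δ : ℝ}

lemma logObjective_zero_le_of_discr_nonpos (hΔ : Δ = (y - ε) ^ 2 - 4 * (lam - y * ε)) (hε : 0 < ε)
    (hΔ0 : Δ ≤ 0) {t : ℝ} (ht : 0 ≤ t) :
    logObjective lam ε y 0 ≤ logObjective lam ε y t :=
  logObjective_le_of_numerator_nonneg (by linarith) ht fun u _ => by
    nlinarith [sq_nonneg (2 * u + ε - y)]

lemma numerator_eq_mul_of_discr_nonneg (hΔ : Δ = (y - ε) ^ 2 - 4 * (lam - y * ε)) (hΔ0 : 0 ≤ Δ)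
    (u : ℝ) :
    (u - y) * (u + ε) + lam =
      (u - (y - ε + √Δ) / 2) * (u - (y - ε - √Δ) / 2) := by
  linear_combination (1 / 4 : ℝ) * Real.sq_sqrt hΔ0 + (1 / 4 : ℝ) * hΔ

lemma min_logObjective_le (hΔ : Δ = (y - ε) ^ 2 - 4 * (lam - y * ε)) (hε : 0 < ε) (hΔ0 : 0 ≤ Δ)
    {t : ℝ} (ht : 0 ≤ t) :
    min (logObjective lam ε y 0) (logObjective lam ε y ((y - ε + √Δ) / 2)) ≤
      logObjective lam ε y t := by
  set r := (y - ε + √Δ) / 2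
  set r' := (y - ε - √Δ) / 2
  have hfac : ∀ u, (u - y) * (u + ε) + lam = (u - r) * (u - r') :=
    numerator_eq_mul_of_discr_nonneg hΔ hΔ0
  have hr' : r' ≤ r := by have := Real.sqrt_nonneg Δ; simp only [r, r']; linarith
  rcases le_total t r' with htr' | hr't
  · refine min_le_of_left_le (logObjective_le_of_numerator_nonneg (by linarith) ht fun u hu => ?_)
    rw [hfac]
    exact mul_nonneg_of_nonpos_of_nonpos (by linarith [hu.2]) (by linarith [hu.2])
  rcases le_total t r with htr | hrt
  · refine min_le_of_right_le (logObjective_le_of_numerator_nonpos (by linarith) htr fun u hu => ?_)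
    rw [hfac]
    exact mul_nonpos_of_nonpos_of_nonneg (by linarith [hu.2]) (by linarith [hu.1])
  · have hmax : logObjective lam ε y (max r 0) ≤ logObjective lam ε y t := by
      refine logObjective_le_of_numerator_nonneg (by linarith [le_max_right r 0]) (max_le hrt ht)
        fun u hu => ?_
      rw [hfac]
      exact mul_nonneg (by linarith [le_max_left r 0, hu.1]) (by linarith [le_max_left r 0, hu.1])
    rcases max_choice r 0 with h | h <;> rw [h] at hmax
    · exact min_le_of_right_le hmax
    · exact min_le_of_left_le hmax

lemma logObjective_le_of_threshold (hΔ : Δ = (y - ε) ^ 2 - 4 * (lam - y * ε)) (hε : 0 < ε)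
    {a : ℝ} (hneg : Δ ≤ 0 → a = 0)
    (hpos : 0 < Δ → ∀ b ∈ ({0, (y - ε + √Δ) / 2} : Set ℝ),
      logObjective lam ε y a ≤ logObjective lam ε y b)
    {t : ℝ} (ht : 0 ≤ t) : logObjective lam ε y a ≤ logObjective lam ε y t := by
  rcases le_or_gt Δ 0 with hΔ0 | hΔ0
  · rw [hneg hΔ0]
    exact logObjective_zero_le_of_discr_nonpos hΔ hε hΔ0 ht
  · exact (le_min (hpos hΔ0 0 (by simp)) (hpos hΔ0 _ (by simp))).trans
      (min_logObjective_le hΔ hε hΔ0.le ht)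

end Scalar

section Majorization

open Finset

variable {ι : Type*} [Fintype ι]

lemma sum_mul_le_sum_of_le_one [DecidableEq ι] (s : Finset ι) {x t : ι → ℝ} {c : ℝ} (hc : 0 ≤ c)
    (hs : ∀ j ∈ s, c ≤ x j) (hsc : ∀ j ∉ s, x j ≤ c) (ht0 : ∀ j, 0 ≤ t j) (ht1 : ∀ j, t j ≤ 1)
    (hsum : ∑ j, t j ≤ #s) :
    ∑ j, t j * x j ≤ ∑ j ∈ s, x j := by
  have hin : ∀ j ∈ s, t j * x j ≤ x j + c * (t j - 1) := fun j hj => by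
    nlinarith [hs j hj, ht1 j]
  have hout : ∀ j ∈ sᶜ, t j * x j ≤ c * t j := fun j hj => by
    nlinarith [hsc j (mem_compl.1 hj), ht0 j]
  calc ∑ j, t j * x j = ∑ j ∈ s, t j * x j + ∑ j ∈ sᶜ, t j * x j := (sum_add_sum_compl s _).symm
    _ ≤ ∑ j ∈ s, (x j + c * (t j - 1)) + ∑ j ∈ sᶜ, c * t j :=
      add_le_add (sum_le_sum hin) (sum_le_sum hout)
    _ = ∑ j ∈ s, x j + c * (∑ j, t j - #s) := by
      rw [← sum_add_sum_compl s t]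
      simp only [sum_add_distrib, ← mul_sum, sum_sub_distrib, sum_const, nsmul_eq_mul, mul_one]
      ring
    _ ≤ ∑ j ∈ s, x j := by linarith [mul_nonpos_of_nonneg_of_nonpos hc (sub_nonpos.2 hsum)]

variable [LinearOrder ι]

lemma sum_mul_nonneg_of_partial_sums_nonneg {y d : ι → ℝ} (hy : Antitone y) (hy0 : ∀ i, 0 ≤ y i)
    (hd : ∀ k, 0 ≤ ∑ i with i ≤ k, d i) : 0 ≤ ∑ i, y i * d i := by
  -- Abel summation: adjoin the indices in increasing order, `c` bounding `y` below so far.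
  suffices key : ∀ s : Finset ι, (∀ k ∈ s, 0 ≤ ∑ i ∈ s with i ≤ k, d i) →
      ∀ c, 0 ≤ c → (∀ i ∈ s, c ≤ y i) → c * ∑ i ∈ s, d i ≤ ∑ i ∈ s, y i * d i by
    simpa using key univ (fun k _ => hd k) 0 le_rfl fun i _ => hy0 i
  intro s
  induction s using Finset.induction_on_max with
  | empty => simp
  | insert a s ha ih =>
    intro hds c hc hcy
    have ha' : a ∉ s := fun h => lt_irrefl a (ha a h)
    have hfilter : ∀ k ∈ s, (insert a s).filter (· ≤ k) = s.filter (· ≤ k) := fun k hk => by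
      rw [filter_insert, if_neg (not_le.2 (ha k hk))]
    have hs := ih (fun k hk => hfilter k hk ▸ hds k (mem_insert_of_mem hk)) (y a) (hy0 a)
      fun i hi => hy (ha i hi).le
    have htot : 0 ≤ ∑ i ∈ insert a s, d i := by
      have := hds a (mem_insert_self a s)
      rwa [filter_true_of_mem fun i hi => ?_] at this
      rcases mem_insert.1 hi with rfl | hi
      · exact le_rfl
      · exact (ha i hi).le
    simp only [sum_insert ha'] at htot ⊢
    nlinarith [hcy a (mem_insert_self a s)]

lemma sum_mul_mul_le_of_substochastic {y x : ι → ℝ} (hy : Antitone y) (hx : Antitone x)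
    (hy0 : ∀ i, 0 ≤ y i) (hx0 : ∀ i, 0 ≤ x i) {S : ι → ι → ℝ} (hS : ∀ i j, 0 ≤ S i j)
    (hrow : ∀ i, ∑ j, S i j ≤ 1) (hcol : ∀ j, ∑ i, S i j ≤ 1) :
    ∑ i, ∑ j, y i * x j * S i j ≤ ∑ i, y i * x i := by
  have hprefix : ∀ k, ∑ i with i ≤ k, ∑ j, S i j * x j ≤ ∑ i with i ≤ k, x i := fun k => by
    rw [sum_comm]
    simp only [← sum_mul]
    refine sum_mul_le_sum_of_le_one _ (hx0 k) (fun j hj => hx (mem_filter.1 hj).2)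
      (fun j hj => hx (le_of_lt (not_le.1 fun h => hj (mem_filter.2 ⟨mem_univ j, h⟩))))
      (fun j => sum_nonneg fun i _ => hS i j)
      (fun j => (sum_le_univ_sum_of_nonneg fun i => hS i j).trans (hcol j)) ?_
    rw [sum_comm]
    simpa using sum_le_sum fun i (_ : i ∈ univ.filter (· ≤ k)) => hrow i
  have habel := sum_mul_nonneg_of_partial_sums_nonneg hy hy0
    (d := fun i => x i - ∑ j, S i j * x j) fun k => by
      simpa [sum_sub_distrib] using hprefix k
  simp only [mul_sub, sum_sub_distrib, mul_sum] at habel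
  calc ∑ i, ∑ j, y i * x j * S i j = ∑ i, ∑ j, y i * (S i j * x j) :=
        sum_congr rfl fun _ _ => sum_congr rfl fun _ _ => by ring
    _ ≤ ∑ i, y i * x i := by linarith

end Majorization

open scoped RealInnerProductSpace

lemma Quaternion.re_mul_comm (p q : Quaternion ℝ) : (p * q).re = (q * p).re := by
  simp only [Quaternion.re_mul]
  ring

lemma Quaternion.re_sum {ι : Type*} (s : Finset ι) (f : ι → Quaternion ℝ) :
    (∑ i ∈ s, f i).re = ∑ i ∈ s, (f i).re :=
  map_sum (QuaternionAlgebra.reₗ _ _ _) f s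

lemma Quaternion.inner_mul_left (p a b : Quaternion ℝ) : ⟪p * a, b⟫ = ⟪a, star p * b⟫ := by
  rw [Quaternion.inner_def, Quaternion.inner_def, star_mul, star_star, ← mul_assoc, mul_assoc,
    Quaternion.re_mul_comm]

lemma Quaternion.inner_mul_right (a q b : Quaternion ℝ) : ⟪a * q, b⟫ = ⟪a, b * star q⟫ := by
  rw [Quaternion.inner_def, Quaternion.inner_def, star_mul, star_star, mul_assoc]

lemma Quaternion.re_mul_le (p q : Quaternion ℝ) : (p * q).re ≤ (‖p‖ ^ 2 + ‖q‖ ^ 2) / 2 := by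
  have h := real_inner_le_norm p (star q)
  rw [Quaternion.inner_def, star_star, Quaternion.norm_star] at h
  nlinarith [two_mul_le_add_sq ‖p‖ ‖q‖]

lemma Quaternion.re_mul_coe_mul (p q : Quaternion ℝ) (r : ℝ) :
    (p * (r : Quaternion ℝ) * q).re = r * (p * q).re := by
  rw [Quaternion.mul_coe_eq_smul, smul_mul_assoc, Quaternion.re_smul, smul_eq_mul]

section FrobeniusInner

variable {l m n : Type*} [Fintype m] [Fintype n]

-- `frobInner A B = Re tr (A Bᴴ)`
def frobInner (A B : Matrix m n ℍ) : ℝ := ∑ i, ∑ j, ⟪A i j, B i j⟫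

lemma frobInner_mul_left [Fintype l] (P : Matrix l m ℍ) (A : Matrix m n ℍ) (B : Matrix l n ℍ) :
    frobInner (P * A) B = frobInner A (Pᴴ * B) := by
  simp only [frobInner, Matrix.mul_apply, sum_inner, inner_sum, Matrix.conjTranspose_apply,
    Quaternion.inner_mul_left]
  rw [Finset.sum_congr rfl fun _ _ => Finset.sum_comm, Finset.sum_comm]
  exact Finset.sum_congr rfl fun _ _ => Finset.sum_comm

lemma frobInner_mul_right [Fintype l] (A : Matrix m n ℍ) (Q : Matrix n l ℍ) (B : Matrix m l ℍ) :
    frobInner (A * Q) B = frobInner A (B * Qᴴ) := by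
  simp only [frobInner, Matrix.mul_apply, sum_inner, inner_sum, Matrix.conjTranspose_apply,
    Quaternion.inner_mul_right]
  exact Finset.sum_congr rfl fun _ _ => Finset.sum_comm

lemma sum_norm_sub_sq (A B : Matrix m n ℍ) :
    ∑ i, ∑ j, ‖A i j - B i j‖ ^ 2 = frobInner A A + frobInner B B - 2 * frobInner A B := by
  simp only [frobInner, norm_sub_sq_real, real_inner_self_eq_norm_sq, Finset.sum_add_distrib,
    Finset.sum_sub_distrib, Finset.mul_sum]
  ring

lemma frobInner_unitary_conj [DecidableEq m] [DecidableEq n] {U : Matrix m m ℍ}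
    {V : Matrix n n ℍ} (hU : U ∈ unitary _) (hV : V ∈ unitary _) (A B : Matrix m n ℍ) :
    frobInner (U * A * Vᴴ) (U * B * Vᴴ) = frobInner A B := by
  have hU' : Uᴴ * U = 1 := Unitary.star_mul_self_of_mem hU
  have hV' : Vᴴ * V = 1 := Unitary.star_mul_self_of_mem hV
  rw [frobInner_mul_right, Matrix.mul_assoc, frobInner_mul_left,
    Matrix.conjTranspose_conjTranspose]
  simp only [← Matrix.mul_assoc, hU', Matrix.one_mul]
  rw [Matrix.mul_assoc, hV', Matrix.mul_one]

lemma sum_norm_sq_row_eq_one [DecidableEq n] {U : Matrix n n ℍ} (hU : U ∈ unitary _) (i : n) :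
    ∑ j, ‖U i j‖ ^ 2 = 1 := by
  have h := congrArg (fun A : Matrix n n ℍ => (A i i).re) (Unitary.mul_star_self_of_mem hU)
  simpa only [Matrix.star_eq_conjTranspose, Matrix.mul_apply, Matrix.conjTranspose_apply,
    Quaternion.re_sum, ← Quaternion.inner_def, real_inner_self_eq_norm_sq, Matrix.one_apply_eq,
    Quaternion.re_one] using h

lemma sum_norm_sq_col_eq_one [DecidableEq n] {U : Matrix n n ℍ}
    (hU : U ∈ unitary _) (j : n) : ∑ i, ‖U i j‖ ^ 2 = 1 := by
  simpa [Matrix.star_apply, Quaternion.norm_star] using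
    sum_norm_sq_row_eq_one (Unitary.star_mem hU) j

lemma frobInner_sum_left {ι : Type*} (s : Finset ι) (A : ι → Matrix m n ℍ) (B : Matrix m n ℍ) :
    frobInner (∑ k ∈ s, A k : Matrix m n ℍ) B = ∑ k ∈ s, frobInner (A k) B := by
  simp only [frobInner, Matrix.sum_apply, sum_inner]
  rw [Finset.sum_congr rfl fun _ _ => Finset.sum_comm, Finset.sum_comm]

lemma frobInner_single_left [DecidableEq m] [DecidableEq n] (i : m) (j : n) (c : ℍ)
    (B : Matrix m n ℍ) :
    frobInner (Matrix.single i j c) B = ⟪c, B i j⟫ := by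
  rw [frobInner, Finset.sum_eq_single i (fun i' _ hi => ?_) (by simp),
    Finset.sum_eq_single j (fun j' _ hj => ?_) (by simp)]
  · simp
  · simp [Ne.symm hj]
  · simp [Ne.symm hi]

lemma mul_single_mul_apply {o : Type*} [DecidableEq m] [DecidableEq n] (P : Matrix l m ℍ)
    (Q : Matrix n o ℍ) (i : m) (j : n) (c : ℍ) (p : l) (q : o) :
    (P * Matrix.single i j c * Q) p q = P p i * c * Q j q := by
  simp [Matrix.mul_apply, Matrix.single_apply, ite_and]

end FrobeniusInner

section RectDiag

variable {M N K : ℕ}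

lemma rectDiag_eq_sum_single (hM : K ≤ M) (hN : K ≤ N) (σ : Fin K → ℝ) :
    rectDiag M N σ = ∑ k, Matrix.single (Fin.castLE hM k) (Fin.castLE hN k) (σ k : ℍ) := by
  refine Matrix.ext fun i j => ?_
  simp only [rectDiag, Matrix.of_apply, Matrix.sum_apply, Matrix.single_apply, Fin.ext_iff,
    Fin.val_castLE]
  split_ifs with h
  · rw [Finset.sum_eq_single ⟨i, h.2⟩ (fun k _ hk => if_neg fun h' => hk (Fin.ext h'.1))
      (fun h' => absurd (Finset.mem_univ _) h')]
    simp [h.1]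
  · refine (Finset.sum_eq_zero fun k _ => if_neg fun h' => ?_).symm
    exact h ⟨h'.1.symm.trans h'.2, h'.1 ▸ k.2⟩

lemma frobInner_rectDiag_left (hM : K ≤ M) (hN : K ≤ N) (σ : Fin K → ℝ)
    (C : Matrix (Fin M) (Fin N) ℍ) :
    frobInner (rectDiag M N σ) C = ∑ k, σ k * (C (Fin.castLE hM k) (Fin.castLE hN k)).re := by
  simp [rectDiag_eq_sum_single hM hN, frobInner_sum_left, frobInner_single_left,
    Quaternion.inner_def]

lemma mul_rectDiag_mul_apply (hM : K ≤ M) (hN : K ≤ N) (σ : Fin K → ℝ)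
    (P : Matrix (Fin M) (Fin M) ℍ) (Q : Matrix (Fin N) (Fin N) ℍ) (p : Fin M) (q : Fin N) :
    (P * rectDiag M N σ * Q) p q =
      ∑ k, P p (Fin.castLE hM k) * (σ k : ℍ) * Q (Fin.castLE hN k) q := by
  simp only [rectDiag_eq_sum_single hM hN, Matrix.mul_sum, Matrix.sum_mul, Matrix.sum_apply,
    mul_single_mul_apply]

lemma frobInner_rectDiag (hM : K ≤ M) (hN : K ≤ N) (σ τ : Fin K → ℝ) :
    frobInner (rectDiag M N σ) (rectDiag M N τ) = ∑ k, σ k * τ k := by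
  rw [frobInner_rectDiag_left hM hN]
  simp [rectDiag]

end RectDiag

section VonNeumann

variable {M N K : ℕ}

lemma sum_castLE_le (h : K ≤ M) {f : Fin M → ℝ} (hf : ∀ i, 0 ≤ f i) :
    ∑ k : Fin K, f (Fin.castLE h k) ≤ ∑ i, f i := by
  calc ∑ k : Fin K, f (Fin.castLE h k) = ∑ i ∈ Finset.univ.map (Fin.castLEEmb h), f i :=
        (Finset.sum_map Finset.univ (Fin.castLEEmb h) f).symm
    _ ≤ ∑ i, f i := Finset.sum_le_univ_sum_of_nonneg hf

lemma frobInner_rectDiag_mul_le (hM : K ≤ M) (hN : K ≤ N) {P : Matrix (Fin M) (Fin M) ℍ}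
    {Q : Matrix (Fin N) (Fin N) ℍ} (hP : P ∈ unitary _) (hQ : Q ∈ unitary _) {y x : Fin K → ℝ}
    (hy : Antitone y) (hx : Antitone x) (hy0 : ∀ k, 0 ≤ y k) (hx0 : ∀ k, 0 ≤ x k) :
    frobInner (rectDiag M N y) (P * rectDiag M N x * Q) ≤ ∑ k, y k * x k := by
  set ιM := Fin.castLE hM
  set ιN := Fin.castLE hN
  let S : Fin K → Fin K → ℝ := fun k l => (‖P (ιM k) (ιM l)‖ ^ 2 + ‖Q (ιN l) (ιN k)‖ ^ 2) / 2
  have hrow : ∀ k, ∑ l, S k l ≤ 1 := fun k => by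
    have hP1 := (sum_castLE_le hM fun l => sq_nonneg ‖P (ιM k) l‖).trans_eq
      (sum_norm_sq_row_eq_one hP _)
    have hQ1 := (sum_castLE_le hN fun l => sq_nonneg ‖Q l (ιN k)‖).trans_eq
      (sum_norm_sq_col_eq_one hQ _)
    simp only [S, ← Finset.sum_div, Finset.sum_add_distrib]
    linarith
  have hcol : ∀ l, ∑ k, S k l ≤ 1 := fun l => by
    have hP1 := (sum_castLE_le hM fun k => sq_nonneg ‖P k (ιM l)‖).trans_eq
      (sum_norm_sq_col_eq_one hP _)
    have hQ1 := (sum_castLE_le hN fun k => sq_nonneg ‖Q (ιN l) k‖).trans_eq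
      (sum_norm_sq_row_eq_one hQ _)
    simp only [S, ← Finset.sum_div, Finset.sum_add_distrib]
    linarith
  calc frobInner (rectDiag M N y) (P * rectDiag M N x * Q)
      = ∑ k, ∑ l, y k * x l * (P (ιM k) (ιM l) * Q (ιN l) (ιN k)).re := by
        simp only [frobInner_rectDiag_left hM hN, mul_rectDiag_mul_apply hM hN, Quaternion.re_sum,
          Quaternion.re_mul_coe_mul, Finset.mul_sum]
        simp only [mul_assoc]
        rfl
    _ ≤ ∑ k, ∑ l, y k * x l * S k l :=
        Finset.sum_le_sum fun k _ => Finset.sum_le_sum fun l _ =>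
          mul_le_mul_of_nonneg_left (Quaternion.re_mul_le _ _) (mul_nonneg (hy0 k) (hx0 l))
    _ ≤ ∑ k, y k * x k :=
        sum_mul_mul_le_of_substochastic hy hx hy0 hx0 (fun _ _ => by positivity) hrow hcol

end VonNeumann

section QSVD

variable {M N : ℕ}

lemma sum_sub_sq_eq {ι : Type*} [Fintype ι] (σ τ : ι → ℝ) :
    ∑ k, (σ k - τ k) ^ 2 = ∑ k, σ k * σ k + ∑ k, τ k * τ k - 2 * ∑ k, σ k * τ k := by
  simp only [Finset.mul_sum, ← Finset.sum_add_distrib, ← Finset.sum_sub_distrib]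
  exact Finset.sum_congr rfl fun _ _ => by ring

lemma IsUnitary.mem_unitary {n : ℕ} {U : Matrix (Fin n) (Fin n) ℍ} (hU : IsUnitary U) :
    U ∈ unitary _ :=
  Unitary.mem_iff.2 ⟨hU.2, hU.1⟩

lemma frobInner_conj_rectDiag {K : ℕ} (hM : K ≤ M) (hN : K ≤ N) {U : Matrix (Fin M) (Fin M) ℍ}
    {V : Matrix (Fin N) (Fin N) ℍ} (hU : U ∈ unitary _) (hV : V ∈ unitary _) (σ τ : Fin K → ℝ) :
    frobInner (U * rectDiag M N σ * Vᴴ) (U * rectDiag M N τ * Vᴴ) = ∑ k, σ k * τ k := by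
  rw [frobInner_unitary_conj hU hV, frobInner_rectDiag hM hN]

lemma frobInner_le_of_isQSVD {Y X : Matrix (Fin M) (Fin N) ℍ} {U W : Matrix (Fin M) (Fin M) ℍ}
    {V Z : Matrix (Fin N) (Fin N) ℍ} {y x : Fin (min M N) → ℝ} (hY : IsQSVD Y U y V)
    (hX : IsQSVD X W x Z) : frobInner Y X ≤ ∑ k, y k * x k := by
  obtain ⟨hU, hV, hy, hy0, rfl⟩ := hY
  obtain ⟨hW, hZ, hx, hx0, rfl⟩ := hX
  have hP : Uᴴ * W ∈ unitary _ := mul_mem (Unitary.star_mem hU.mem_unitary) hW.mem_unitary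
  have hQ : Zᴴ * V ∈ unitary _ := mul_mem (Unitary.star_mem hZ.mem_unitary) hV.mem_unitary
  rw [frobInner_mul_right, frobInner_mul_left, Matrix.conjTranspose_conjTranspose]
  simpa only [Matrix.mul_assoc] using
    frobInner_rectDiag_mul_le (min_le_left M N) (min_le_right M N) hP hQ hy hx hy0 hx0

lemma sum_norm_sq_sub_conj_rectDiag {U : Matrix (Fin M) (Fin M) ℍ} {V : Matrix (Fin N) (Fin N) ℍ}
    (hU : IsUnitary U) (hV : IsUnitary V) (σ τ : Fin (min M N) → ℝ) :
    ∑ i, ∑ j, ‖(U * rectDiag M N σ * Vᴴ) i j - (U * rectDiag M N τ * Vᴴ) i j‖ ^ 2 =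
      ∑ k, (σ k - τ k) ^ 2 := by
  simp only [sum_norm_sub_sq, frobInner_conj_rectDiag (min_le_left M N) (min_le_right M N)
    hU.mem_unitary hV.mem_unitary, sum_sub_sq_eq]

lemma sum_sq_sub_le_of_isQSVD {Y X : Matrix (Fin M) (Fin N) ℍ} {U W : Matrix (Fin M) (Fin M) ℍ}
    {V Z : Matrix (Fin N) (Fin N) ℍ} {y x : Fin (min M N) → ℝ} (hY : IsQSVD Y U y V)
    (hX : IsQSVD X W x Z) : ∑ k, (y k - x k) ^ 2 ≤ ∑ i, ∑ j, ‖Y i j - X i j‖ ^ 2 := by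
  have hYY : frobInner Y Y = ∑ k, y k * y k := by
    rw [hY.2.2.2.2, frobInner_conj_rectDiag (min_le_left M N) (min_le_right M N)
      hY.1.mem_unitary hY.2.1.mem_unitary]
  have hXX : frobInner X X = ∑ k, x k * x k := by
    rw [hX.2.2.2.2, frobInner_conj_rectDiag (min_le_left M N) (min_le_right M N)
      hX.1.mem_unitary hX.2.1.mem_unitary]
  have hYX := frobInner_le_of_isQSVD hY hX
  rw [sum_norm_sub_sq, hYY, hXX, sum_sub_sq_eq]
  linarith

end QSVD

theorem qlsvt_general {M N : ℕ} (lam ε : ℝ) (hε : 0 < ε)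
    (Y : Matrix (Fin M) (Fin N) ℍ)
    (U : Matrix (Fin M) (Fin M) ℍ) (y : Fin (min M N) → ℝ)
    (V : Matrix (Fin N) (Fin N) ℍ) (hY : IsQSVD Y U y V)
    (Δ : Fin (min M N) → ℝ)
    (hΔ : ∀ i, Δ i = (y i - ε) ^ 2 - 4 * (lam - y i * ε))
    (h : Fin (min M N) → ℝ → ℝ)
    (hh : ∀ i a, h i a = (1 / 2) * (a - y i) ^ 2 + lam * Real.log (a + ε))
    (a : Fin (min M N) → ℝ)
    (haneg : ∀ i, Δ i ≤ 0 → a i = 0)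
    (hapos : ∀ i, 0 < Δ i →
      a i ∈ ({0, (y i - ε + Real.sqrt (Δ i)) / 2} : Set ℝ) ∧
        ∀ b ∈ ({0, (y i - ε + Real.sqrt (Δ i)) / 2} : Set ℝ), h i (a i) ≤ h i b) :
    ∀ (X : Matrix (Fin M) (Fin N) ℍ) (x : Fin (min M N) → ℝ), HasQSVD X x →
      (1 / 2) * (∑ i, ∑ j, ‖Y i j - (U * rectDiag M N a * Vᴴ) i j‖ ^ 2) +
          lam * ∑ i, Real.log (a i + ε) ≤
        (1 / 2) * (∑ i, ∑ j, ‖Y i j - X i j‖ ^ 2) + lam * ∑ i, Real.log (x i + ε) := by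
  intro X x ⟨W, Z, hX⟩
  obtain rfl : h = fun i => logObjective lam ε (y i) := funext fun i => funext (hh i)
  have hscalar : ∀ k, logObjective lam ε (y k) (a k) ≤ logObjective lam ε (y k) (x k) := fun k =>
    logObjective_le_of_threshold (hΔ k) hε (haneg k) (fun hk => (hapos k hk).2) (hX.2.2.2.1 k)
  have hfit : ∑ i, ∑ j, ‖Y i j - (U * rectDiag M N a * Vᴴ) i j‖ ^ 2 = ∑ k, (y k - a k) ^ 2 := by
    rw [hY.2.2.2.2]
    exact sum_norm_sq_sub_conj_rectDiag hY.1 hY.2.1 y a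
  have hdist := sum_sq_sub_le_of_isQSVD hY hX
  have hsum := Finset.sum_le_sum fun k (_ : k ∈ Finset.univ) => hscalar k
  simp only [logObjective, Finset.sum_add_distrib, ← Finset.mul_sum, sub_sq_comm _ (y _)] at hsum
  rw [hfit]
  linarith

/-- Quaternion logarithmic singular value thresholding (QLSVT): applying the scalar
thresholding operator to the singular values of `Y` yields a global minimizer of
`X ↦ ½ ‖Y - X‖_F² + λ ‖X‖_L^1` over matrices admitting a QSVD. -/
theorem qlsvt {M N : ℕ} (lam ε : ℝ) (hlam : 0 < lam) (hε : 0 < ε)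
    (Y : Matrix (Fin M) (Fin N) ℍ)
    (U : Matrix (Fin M) (Fin M) ℍ) (y : Fin (min M N) → ℝ)
    (V : Matrix (Fin N) (Fin N) ℍ) (hY : IsQSVD Y U y V)
    (Δ : Fin (min M N) → ℝ)
    (hΔ : ∀ i, Δ i = (y i - ε) ^ 2 - 4 * (lam - y i * ε))
    (h : Fin (min M N) → ℝ → ℝ)
    (hh : ∀ i a, h i a = (1 / 2) * (a - y i) ^ 2 + lam * Real.log (a + ε))
    (a : Fin (min M N) → ℝ)
    (ha0 : ∀ i, 0 ≤ a i)
    (haneg : ∀ i, Δ i ≤ 0 → a i = 0)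
    (hapos : ∀ i, 0 < Δ i →
      a i ∈ ({0, (y i - ε + Real.sqrt (Δ i)) / 2} : Set ℝ) ∧
        ∀ b ∈ ({0, (y i - ε + Real.sqrt (Δ i)) / 2} : Set ℝ), h i (a i) ≤ h i b) :
    ∀ (X : Matrix (Fin M) (Fin N) ℍ) (x : Fin (min M N) → ℝ), HasQSVD X x →
      (1 / 2) * (∑ i, ∑ j, ‖Y i j - (U * rectDiag M N a * Vᴴ) i j‖ ^ 2) +
          lam * ∑ i, Real.log (a i + ε) ≤
        (1 / 2) * (∑ i, ∑ j, ‖Y i j - X i j‖ ^ 2) + lam * ∑ i, Real.log (x i + ε) :=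
  qlsvt_general lam ε hε Y U y V hY Δ hΔ h hh a haneg hapos
end
end

section
/- Let x ≥ 0, ε > 0, λ > 0, and define h : ℝ → ℝ by h(a) = ½(a − x)² + λ·log(a + ε) and Δ = (x − ε)² − 4(λ − x·ε). If Δ ≤ 0, then h is monotone nondecreasing on [0, ∞); in particular h(0) ≤ h(a) for every a ≥ 0, so 0 is a global minimizer of h over [0, ∞). -/
/-!
On `a > -ε` the derivative of `h` is `(a - x) + λ / (a + ε)`, whose sign is that of
`(a - x)(a + ε) + λ = (a + (ε - x) / 2)² - Δ / 4`. For `Δ ≤ 0` this is nonnegative, so `h` is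
monotone on `(-ε, ∞) ⊇ [0, ∞)`.
-/

open Set

theorem hasDerivAt_half_sq_sub_add_mul_log_add (x ε lam : ℝ) {a : ℝ} (ha : a + ε ≠ 0) :
    HasDerivAt (fun a => 1 / 2 * (a - x) ^ 2 + lam * Real.log (a + ε))
      ((a - x) + lam / (a + ε)) a := by
  have hsq := (((hasDerivAt_id a).sub_const x).pow 2).const_mul (1 / 2 : ℝ)
  have hlog := (((hasDerivAt_id a).add_const ε).log ha).const_mul lam
  refine (hsq.add hlog).congr_deriv ?_
  simp only [id]
  ring

theorem sub_mul_add_add_eq_sq_sub_discr (a x ε lam : ℝ) :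
    (a - x) * (a + ε) + lam = (a + (ε - x) / 2) ^ 2 - ((x - ε) ^ 2 - 4 * (lam - x * ε)) / 4 := by
  ring

theorem sub_add_div_nonneg_of_discr_nonpos {a x ε lam : ℝ} (ha : 0 < a + ε)
    (hΔ : (x - ε) ^ 2 - 4 * (lam - x * ε) ≤ 0) : 0 ≤ (a - x) + lam / (a + ε) := by
  have hnum : 0 ≤ (a - x) * (a + ε) + lam := by
    rw [sub_mul_add_add_eq_sq_sub_discr]
    linarith [sq_nonneg (a + (ε - x) / 2)]
  have hsplit : (a - x) + lam / (a + ε) = ((a - x) * (a + ε) + lam) / (a + ε) := by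
    field_simp
  rw [hsplit]
  positivity

theorem monotoneOn_half_sq_sub_add_mul_log_add {x ε lam : ℝ}
    (hΔ : (x - ε) ^ 2 - 4 * (lam - x * ε) ≤ 0) :
    MonotoneOn (fun a => 1 / 2 * (a - x) ^ 2 + lam * Real.log (a + ε)) (Ioi (-ε)) := by
  have hpos : ∀ a ∈ Ioi (-ε), 0 < a + ε := fun a ha => neg_lt_iff_pos_add.mp ha
  have hderiv : ∀ a ∈ Ioi (-ε), HasDerivAt (fun a => 1 / 2 * (a - x) ^ 2 + lam * Real.log (a + ε))
      ((a - x) + lam / (a + ε)) a :=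
    fun a ha => hasDerivAt_half_sq_sub_add_mul_log_add x ε lam (hpos a ha).ne'
  refine monotoneOn_of_hasDerivWithinAt_nonneg (f' := fun a => (a - x) + lam / (a + ε))
    (convex_Ioi _) (fun a ha => (hderiv a ha).continuousAt.continuousWithinAt) ?_ ?_
  · rw [interior_Ioi]
    exact fun a ha => (hderiv a ha).hasDerivWithinAt
  · rw [interior_Ioi]
    exact fun a ha => sub_add_div_nonneg_of_discr_nonpos (hpos a ha) hΔ

theorem qlsvt_scalar_nonpos_general (x ε lam : ℝ) (hε : 0 < ε)
    (h : ℝ → ℝ) (hh : ∀ a, h a = (1 / 2) * (a - x) ^ 2 + lam * Real.log (a + ε))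
    (Δ : ℝ) (hΔ : Δ = (x - ε) ^ 2 - 4 * (lam - x * ε)) (hneg : Δ ≤ 0) :
    MonotoneOn h (Set.Ici 0) ∧ ∀ a : ℝ, 0 ≤ a → h 0 ≤ h a := by
  obtain rfl : h = fun a => 1 / 2 * (a - x) ^ 2 + lam * Real.log (a + ε) := funext hh
  have hmono := (monotoneOn_half_sq_sub_add_mul_log_add (hΔ ▸ hneg)).mono
    (Ici_subset_Ioi.mpr (neg_neg_iff_pos.mpr hε))
  exact ⟨hmono, fun a ha => hmono self_mem_Ici ha ha⟩

/-- Scalar QLSVT minimization, nonpositive-discriminant case: if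
`Δ = (x - ε)² - 4(λ - xε) ≤ 0` then `h(a) = ½(a - x)² + λ log(a + ε)` is monotone
nondecreasing on `[0, ∞)`, so `0` is a global minimizer of `h` over `[0, ∞)`. -/
theorem qlsvt_scalar_nonpos (x ε lam : ℝ) (hx : 0 ≤ x) (hε : 0 < ε) (hlam : 0 < lam)
    (h : ℝ → ℝ) (hh : ∀ a, h a = (1 / 2) * (a - x) ^ 2 + lam * Real.log (a + ε))
    (Δ : ℝ) (hΔ : Δ = (x - ε) ^ 2 - 4 * (lam - x * ε)) (hneg : Δ ≤ 0) :
    MonotoneOn h (Set.Ici 0) ∧ ∀ a : ℝ, 0 ≤ a → h 0 ≤ h a :=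
  qlsvt_scalar_nonpos_general x ε lam hε h hh Δ hΔ hneg
end

section
/- Let x ≥ 0, ε > 0, λ > 0, and define h : ℝ → ℝ by h(a) = ½(a − x)² + λ·log(a + ε) and Δ = (x − ε)² − 4(λ − x·ε). If Δ > 0, then with a⋆ = ½(x − ε + √Δ) one has min(h(0), h(a⋆)) ≤ h(a) for every a ≥ 0; that is, the minimum of h over [0, ∞) is attained at 0 or at a⋆. -/
/-!
`h'(a) = (a - r)(a - s)/(a + ε)`, where `r, s = (x - ε ± √Δ)/2` are the roots of
`a² - (x - ε)a + (λ - xε)`. On `[0, ∞)` the function `h` therefore increases up to `s`,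
decreases on `[s, r]` and increases again after `r`, so its minimum there is at `0` or at `r`.
-/

open Set Real

lemma le_of_hasDerivAt_nonneg {f f' : ℝ → ℝ} {p q : ℝ} (hpq : p ≤ q)
    (hf : ∀ b ∈ Icc p q, HasDerivAt f (f' b) b) (hf' : ∀ b ∈ Ioo p q, 0 ≤ f' b) :
    f p ≤ f q :=
  monotoneOn_of_hasDerivWithinAt_nonneg (convex_Icc p q)
    (fun b hb ↦ (hf b hb).continuousAt.continuousWithinAt)
    (fun b hb ↦ (hf b (interior_subset hb)).hasDerivWithinAt) (by rwa [interior_Icc])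
    (left_mem_Icc.2 hpq) (right_mem_Icc.2 hpq) hpq

lemma le_of_hasDerivAt_nonpos {f f' : ℝ → ℝ} {p q : ℝ} (hpq : p ≤ q)
    (hf : ∀ b ∈ Icc p q, HasDerivAt f (f' b) b) (hf' : ∀ b ∈ Ioo p q, f' b ≤ 0) :
    f q ≤ f p :=
  antitoneOn_of_hasDerivWithinAt_nonpos (convex_Icc p q)
    (fun b hb ↦ (hf b hb).continuousAt.continuousWithinAt)
    (fun b hb ↦ (hf b (interior_subset hb)).hasDerivWithinAt) (by rwa [interior_Icc])
    (left_mem_Icc.2 hpq) (right_mem_Icc.2 hpq) hpq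

theorem min_apply_zero_apply_le_of_hasDerivAt {f w : ℝ → ℝ} {r s : ℝ} (hsr : s ≤ r)
    (hf : ∀ b, 0 ≤ b → HasDerivAt f ((b - r) * (b - s) * w b) b)
    (hw : ∀ b, 0 ≤ b → 0 ≤ w b) {a : ℝ} (ha : 0 ≤ a) :
    min (f 0) (f r) ≤ f a := by
  have hf_Icc : ∀ p q, 0 ≤ p → ∀ b ∈ Icc p q, HasDerivAt f ((b - r) * (b - s) * w b) b :=
    fun p q hp b hb ↦ hf b (hp.trans hb.1)
  have hw_Ioo : ∀ p q, 0 ≤ p → ∀ b ∈ Ioo p q, 0 ≤ w b :=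
    fun p q hp b hb ↦ hw b (hp.trans hb.1.le)
  rcases le_total r a with hra | har
  · rcases le_total 0 r with hr | hr
    · refine (min_le_right _ _).trans (le_of_hasDerivAt_nonneg hra (hf_Icc r a hr) ?_)
      intro b hb
      exact mul_nonneg (by nlinarith [hb.1]) (hw_Ioo r a hr b hb)
    · refine (min_le_left _ _).trans (le_of_hasDerivAt_nonneg ha (hf_Icc 0 a le_rfl) ?_)
      intro b hb
      exact mul_nonneg (by nlinarith [hb.1]) (hw_Ioo 0 a le_rfl b hb)
  · rcases le_total s a with hsa | has
    · refine (min_le_right _ _).trans (le_of_hasDerivAt_nonpos har (hf_Icc a r ha) ?_)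
      intro b hb
      exact mul_nonpos_of_nonpos_of_nonneg (by nlinarith [hb.1, hb.2])
        (hw_Ioo a r ha b hb)
    · refine (min_le_left _ _).trans (le_of_hasDerivAt_nonneg ha (hf_Icc 0 a le_rfl) ?_)
      intro b hb
      exact mul_nonneg (by nlinarith [hb.2]) (hw_Ioo 0 a le_rfl b hb)

lemma hasDerivAt_half_sq_sub_add_mul_log {x ε lam r s b : ℝ} (hsum : r + s = x - ε)
    (hprod : r * s = lam - x * ε) (hb : 0 < b + ε) :
    HasDerivAt (fun a ↦ 1 / 2 * (a - x) ^ 2 + lam * log (a + ε))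
      ((b - r) * (b - s) * (b + ε)⁻¹) b := by
  have hquad : HasDerivAt (fun a ↦ 1 / 2 * (a - x) ^ 2) (b - x) b := by
    simpa using (((hasDerivAt_id b).sub_const x).pow 2).const_mul (1 / 2 : ℝ)
  have hlog : HasDerivAt (fun a ↦ log (a + ε)) (b + ε)⁻¹ b := by
    simpa using ((hasDerivAt_id b).add_const ε).log hb.ne'
  refine (hquad.add (hlog.const_mul lam)).congr_deriv ?_
  have hfactor : (b - r) * (b - s) = (b - x) * (b + ε) + lam := by
    linear_combination (-b) * hsum + hprod
  rw [hfactor]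
  field_simp

theorem qlsvt_scalar_pos_general (x ε lam : ℝ) (hε : 0 < ε)
    (h : ℝ → ℝ) (hh : ∀ a, h a = (1 / 2) * (a - x) ^ 2 + lam * Real.log (a + ε))
    (Δ : ℝ) (hΔ : Δ = (x - ε) ^ 2 - 4 * (lam - x * ε)) (hpos : 0 < Δ) :
    ∀ a : ℝ, 0 ≤ a → min (h 0) (h ((x - ε + Real.sqrt Δ) / 2)) ≤ h a := by
  obtain rfl : h = fun a ↦ 1 / 2 * (a - x) ^ 2 + lam * log (a + ε) := funext hh
  have hsqrt : Real.sqrt Δ ^ 2 = Δ := sq_sqrt hpos.le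
  intro a ha
  refine min_apply_zero_apply_le_of_hasDerivAt (s := (x - ε - Real.sqrt Δ) / 2)
    (w := fun b ↦ (b + ε)⁻¹) (by linarith [sqrt_nonneg Δ])
    (fun b hb ↦ hasDerivAt_half_sq_sub_add_mul_log (by ring) ?_ (by linarith))
    (fun b hb ↦ by positivity) ha
  linear_combination (-hsqrt - hΔ) / 4

/-- Scalar QLSVT minimization, positive-discriminant case: if
`Δ = (x - ε)² - 4(λ - xε) > 0` then the minimum of `h(a) = ½(a - x)² + λ log(a + ε)`
over `[0, ∞)` is attained at `0` or at `a⋆ = ½(x - ε + √Δ)`. -/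
theorem qlsvt_scalar_pos (x ε lam : ℝ) (hx : 0 ≤ x) (hε : 0 < ε) (hlam : 0 < lam)
    (h : ℝ → ℝ) (hh : ∀ a, h a = (1 / 2) * (a - x) ^ 2 + lam * Real.log (a + ε))
    (Δ : ℝ) (hΔ : Δ = (x - ε) ^ 2 - 4 * (lam - x * ε)) (hpos : 0 < Δ) :
    ∀ a : ℝ, 0 ≤ a → min (h 0) (h ((x - ε + Real.sqrt Δ) / 2)) ≤ h a :=
  qlsvt_scalar_pos_general x ε lam hε h hh Δ hΔ hpos
end

section
/- Let X ∈ ℍ^{M×N} admit a QSVD with singular values σ : Fin (min M N) → ℝ, and let r ≤ min(M, N). Then for all quaternion matrices A ∈ ℍ^{r×M} and B ∈ ℍ^{r×N} satisfying A * Aᴴ = I_r and B * Bᴴ = I_r, one has ‖tr(A * X * Bᴴ)‖ ≤ Σ_{i=1}^{r} σ i, where tr denotes the quaternion trace (the sum of the diagonal entries) and ‖·‖ the quaternion modulus. -/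
noncomputable section

open Matrix

private lemma quat_coe_sum {ι : Type*} (s : Finset ι) (f : ι → ℝ) :
    ((∑ i ∈ s, f i : ℝ) : ℍ) = ∑ i ∈ s, ((f i : ℝ) : ℍ) := by
  exact_mod_cast (map_sum (algebraMap ℝ ℍ) f s)

private lemma sum_castLE {α : Type*} [AddCommMonoid α] {K n : ℕ} (h : K ≤ n) (f : Fin n → α) :
    ∑ l : Fin K, f (Fin.castLE h l) =
      ∑ k ∈ Finset.univ.filter (fun k : Fin n => (k : ℕ) < K), f k := by
  refine Finset.sum_bij' (fun l (_ : l ∈ Finset.univ) => Fin.castLE h l)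
    (fun k hk => ⟨(k : ℕ), (Finset.mem_filter.mp hk).2⟩) ?_ ?_ ?_ ?_ ?_
  · intro a _; simp [Fin.castLE, a.isLt]
  · intro a _; exact Finset.mem_univ _
  · intro a _; exact Fin.ext rfl
  · intro a _; exact Fin.ext rfl
  · intro a _; rfl

/-- The Abel-summation style bound. -/
private lemma abel_bound {K r : ℕ} (hrK : r ≤ K) (σ t : Fin K → ℝ)
    (hσa : Antitone σ) (hσ0 : ∀ i, 0 ≤ σ i) (ht0 : ∀ i, 0 ≤ t i)
    (ht1 : ∀ i, t i ≤ 1) (hts : ∑ i, t i ≤ (r : ℝ)) :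
    ∑ i, σ i * t i ≤ ∑ i : Fin r, σ (Fin.castLE hrK i) := by
  classical
  rw [sum_castLE hrK]
  rcases lt_or_eq_of_le hrK with h | h
  · set S := Finset.univ.filter (fun i : Fin K => (i : ℕ) < r) with hS
    set Sc := Finset.univ.filter (fun i : Fin K => ¬ (i : ℕ) < r) with hSc
    have hcard : (S.card : ℝ) = r := by
      have := sum_castLE (α := ℝ) hrK (fun _ => 1)
      simpa using this.symm
    set ρ := σ ⟨r, h⟩ with hρ
    have hρ0 : 0 ≤ ρ := hσ0 _
    have hsplit : ∑ i ∈ S, σ i * t i + ∑ i ∈ Sc, σ i * t i = ∑ i, σ i * t i :=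
      Finset.sum_filter_add_sum_filter_not _ _ _
    have htsplit : ∑ i ∈ S, t i + ∑ i ∈ Sc, t i = ∑ i, t i :=
      Finset.sum_filter_add_sum_filter_not _ _ _
    have h1 : ∑ i ∈ Sc, σ i * t i ≤ ρ * ∑ i ∈ Sc, t i := by
      rw [Finset.mul_sum]
      refine Finset.sum_le_sum ?_
      intro i hi
      have hir : r ≤ (i : ℕ) := not_lt.mp (Finset.mem_filter.mp hi).2
      have hσρ : σ i ≤ ρ := hσa (show (⟨r, h⟩ : Fin K) ≤ i from hir)
      nlinarith [ht0 i]
    have h2 : ρ * ∑ i ∈ Sc, t i ≤ ρ * ((r : ℝ) - ∑ i ∈ S, t i) := by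
      apply mul_le_mul_of_nonneg_left _ hρ0
      linarith
    have hexp : ∑ i ∈ S, ρ * (1 - t i) = ρ * ((r : ℝ) - ∑ i ∈ S, t i) := by
      rw [← Finset.mul_sum, Finset.sum_sub_distrib, Finset.sum_const, nsmul_eq_mul, mul_one,
        hcard]
    have hadd : ∑ i ∈ S, (σ i * t i + ρ * (1 - t i))
        = ∑ i ∈ S, σ i * t i + ∑ i ∈ S, ρ * (1 - t i) := Finset.sum_add_distrib
    have h3 : ∑ i ∈ S, (σ i * t i + ρ * (1 - t i)) ≤ ∑ i ∈ S, σ i := by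
      refine Finset.sum_le_sum ?_
      intro i hi
      have hir : (i : ℕ) < r := (Finset.mem_filter.mp hi).2
      have hρσ : ρ ≤ σ i := hσa (show i ≤ (⟨r, h⟩ : Fin K) from le_of_lt hir)
      nlinarith [ht1 i]
    linarith
  · subst h
    rw [Finset.filter_true_of_mem (fun i _ => i.isLt)]
    refine Finset.sum_le_sum ?_
    intro i _
    nlinarith [ht1 i, ht0 i, hσ0 i]

/-- Column norm bound for a semi-unitary matrix. -/
private lemma col_bound {r n : ℕ} (P : Matrix (Fin r) (Fin n) ℍ) (hPP : P * Pᴴ = 1)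
    (j : Fin n) : ∑ i, ‖P i j‖ * ‖P i j‖ ≤ 1 := by
  classical
  set G := Pᴴ * P with hG
  have hGsym : Gᴴ = G := by simp [hG, Matrix.conjTranspose_mul, Matrix.mul_assoc]
  have hG2 : G * G = G := by
    rw [hG, Matrix.mul_assoc, ← Matrix.mul_assoc P Pᴴ P, hPP, Matrix.one_mul]
  set s := ∑ i, ‖P i j‖ * ‖P i j‖ with hs
  have hs0 : 0 ≤ s := Finset.sum_nonneg fun i _ => mul_nonneg (norm_nonneg _) (norm_nonneg _)
  have hdiag : G j j = (s : ℍ) := by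
    rw [hG, Matrix.mul_apply, hs, quat_coe_sum]
    refine Finset.sum_congr rfl fun i _ => ?_
    rw [Matrix.conjTranspose_apply, Quaternion.star_mul_self,
      Quaternion.normSq_eq_norm_mul_self]
  have hGG : G j j = ((∑ k, Quaternion.normSq (G j k) : ℝ) : ℍ) := by
    conv_lhs => rw [← hG2]
    rw [Matrix.mul_apply, quat_coe_sum]
    refine Finset.sum_congr rfl fun k _ => ?_
    rw [show G k j = star (G j k) by
      conv_rhs => rw [← Matrix.conjTranspose_apply, hGsym]]
    rw [Quaternion.self_mul_star]
  have hkey : s = ∑ k, Quaternion.normSq (G j k) :=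
    Quaternion.coe_injective (hdiag ▸ hGG)
  have hterm : Quaternion.normSq (G j j) ≤ ∑ k, Quaternion.normSq (G j k) := by
    refine Finset.single_le_sum (f := fun k => Quaternion.normSq (G j k)) (fun k _ => by
      simp only [Quaternion.normSq_eq_norm_mul_self]; positivity) (Finset.mem_univ j)
  rw [hdiag, Quaternion.normSq_coe] at hterm
  nlinarith

/-- Total column norm of a semi-unitary matrix. -/
private lemma total_bound {r n : ℕ} (P : Matrix (Fin r) (Fin n) ℍ) (hPP : P * Pᴴ = 1) :
    ∑ j, ∑ i, ‖P i j‖ * ‖P i j‖ = (r : ℝ) := by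
  have htr : Matrix.trace (P * Pᴴ) = (((r : ℕ) : ℝ) : ℍ) := by
    rw [hPP, Matrix.trace_one, Quaternion.coe_natCast]
    norm_num
  have htr2 : Matrix.trace (P * Pᴴ) = ((∑ i, ∑ j, ‖P i j‖ * ‖P i j‖ : ℝ) : ℍ) := by
    rw [Matrix.trace, quat_coe_sum]
    refine Finset.sum_congr rfl fun i _ => ?_
    rw [Matrix.diag_apply, Matrix.mul_apply, quat_coe_sum]
    refine Finset.sum_congr rfl fun j _ => ?_
    rw [Matrix.conjTranspose_apply, Quaternion.self_mul_star,
      Quaternion.normSq_eq_norm_mul_self]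
  have h := Quaternion.coe_injective (htr2.symm.trans htr)
  rw [Finset.sum_comm] at h
  exact_mod_cast h


set_option maxHeartbeats 1000000 in
/-- Trace inequality: for semi-unitary `A : ℍ^{r×M}` and `B : ℍ^{r×N}`,
`‖tr(A * X * Bᴴ)‖` is at most the sum of the `r` largest singular values of `X`. -/
theorem qsvd_trace_ineq {M N r : ℕ} (hr : r ≤ min M N)
    (X : Matrix (Fin M) (Fin N) ℍ) (σ : Fin (min M N) → ℝ) (hX : HasQSVD X σ) :
    ∀ (A : Matrix (Fin r) (Fin M) ℍ) (B : Matrix (Fin r) (Fin N) ℍ),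
      A * Aᴴ = 1 → B * Bᴴ = 1 →
        ‖Matrix.trace (A * X * Bᴴ)‖ ≤ ∑ i : Fin r, σ (Fin.castLE hr i) := by
  classical
  obtain ⟨U, V, hUu, hVu, hσa, hσ0, hXeq⟩ := hX
  intro A B hA hB
  have hKM : min M N ≤ M := min_le_left M N
  have hKN : min M N ≤ N := min_le_right M N
  set P := A * U with hPdef
  set Q := B * V with hQdef
  have hPP : P * Pᴴ = 1 := by
    rw [hPdef, Matrix.conjTranspose_mul, Matrix.mul_assoc, ← Matrix.mul_assoc U, hUu.1,
      Matrix.one_mul, hA]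
  have hQQ : Q * Qᴴ = 1 := by
    rw [hQdef, Matrix.conjTranspose_mul, Matrix.mul_assoc, ← Matrix.mul_assoc V, hVu.1,
      Matrix.one_mul, hB]
  have hrw : A * X * Bᴴ = P * rectDiag M N σ * Qᴴ := by
    rw [hXeq, hPdef, hQdef, Matrix.conjTranspose_mul]
    simp only [Matrix.mul_assoc]
  rw [hrw]
  set e1 : Fin (min M N) → Fin M := Fin.castLE hKM with he1
  set e2 : Fin (min M N) → Fin N := Fin.castLE hKN with he2
  -- the product with the rectangular diagonal
  have hPDl : ∀ (i : Fin r) (l : Fin (min M N)),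
      (P * rectDiag M N σ) i (e2 l) = P i (e1 l) * ((σ l : ℝ) : ℍ) := by
    intro i l
    rw [Matrix.mul_apply]
    rw [Finset.sum_eq_single (e1 l)]
    · congr 1
      show rectDiag M N σ (e1 l) (e2 l) = _
      unfold rectDiag
      rw [Matrix.of_apply, dif_pos ⟨rfl, l.isLt⟩]
      exact congrArg _ (congrArg σ (Fin.ext rfl))
    · intro b _ hb
      have hcond : ¬ (((b : ℕ) = ((e2 l : Fin N) : ℕ)) ∧ (b : ℕ) < min M N) := by
        rintro ⟨h1, _⟩
        exact hb (Fin.ext h1)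
      show P i b * rectDiag M N σ b (e2 l) = 0
      unfold rectDiag
      rw [Matrix.of_apply, dif_neg hcond, mul_zero]
    · intro hmem; exact absurd (Finset.mem_univ _) hmem
  have hPD0 : ∀ (i : Fin r) (k : Fin N), min M N ≤ (k : ℕ) →
      (P * rectDiag M N σ) i k = 0 := by
    intro i k hk
    rw [Matrix.mul_apply]
    apply Finset.sum_eq_zero
    intro b _
    have hcond : ¬ (((b : ℕ) = (k : ℕ)) ∧ (b : ℕ) < min M N) := by
      rintro ⟨h1, h2⟩
      exact absurd (h1 ▸ h2) (not_lt.mpr hk)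
    show P i b * rectDiag M N σ b k = 0
    unfold rectDiag
    rw [Matrix.of_apply, dif_neg hcond, mul_zero]
  have htrace : Matrix.trace (P * rectDiag M N σ * Qᴴ)
      = ∑ l : Fin (min M N), ((σ l : ℝ) : ℍ)
          * ∑ i : Fin r, P i (e1 l) * star (Q i (e2 l)) := by
    rw [Matrix.trace]
    have hrow : ∀ i : Fin r, (P * rectDiag M N σ * Qᴴ).diag i
        = ∑ l : Fin (min M N),
            ((σ l : ℝ) : ℍ) * (P i (e1 l) * star (Q i (e2 l))) := by
      intro i
      rw [Matrix.diag_apply, Matrix.mul_apply]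
      have hne : ∀ k ∈ Finset.univ, (P * rectDiag M N σ) i k * Qᴴ k i ≠ 0 →
          (k : ℕ) < min M N := by
        intro k _ hne
        by_contra hK'
        exact hne (by rw [hPD0 i k (not_lt.mp hK'), zero_mul])
      rw [← Finset.sum_filter_of_ne hne,
        ← sum_castLE hKN (fun k => (P * rectDiag M N σ) i k * Qᴴ k i)]
      refine Finset.sum_congr rfl fun l _ => ?_
      rw [show Fin.castLE hKN l = e2 l from rfl, hPDl i l, Matrix.conjTranspose_apply,
        show P i (e1 l) * ((σ l : ℝ) : ℍ) = ((σ l : ℝ) : ℍ) * P i (e1 l) from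
          (Quaternion.coe_commutes _ _).symm,
        mul_assoc]
    rw [Finset.sum_congr rfl fun i _ => hrow i]
    rw [Finset.sum_comm]
    exact Finset.sum_congr rfl fun l _ => (Finset.mul_sum _ _ _).symm
  rw [htrace]
  set t : Fin (min M N) → ℝ := fun l =>
    ((∑ i, ‖P i (e1 l)‖ * ‖P i (e1 l)‖) + ∑ i, ‖Q i (e2 l)‖ * ‖Q i (e2 l)‖) / 2 with ht
  have hnorm : ‖∑ l : Fin (min M N),
        ((σ l : ℝ) : ℍ) * ∑ i : Fin r, P i (e1 l) * star (Q i (e2 l))‖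
      ≤ ∑ l : Fin (min M N), σ l * t l := by
    refine (norm_sum_le _ _).trans (Finset.sum_le_sum fun l _ => ?_)
    rw [norm_mul, Quaternion.norm_coe, Real.norm_eq_abs, abs_of_nonneg (hσ0 l)]
    refine mul_le_mul_of_nonneg_left ?_ (hσ0 l)
    refine (norm_sum_le _ _).trans ?_
    have hterm : ∀ i : Fin r, ‖P i (e1 l) * star (Q i (e2 l))‖
        ≤ (‖P i (e1 l)‖ * ‖P i (e1 l)‖ + ‖Q i (e2 l)‖ * ‖Q i (e2 l)‖) / 2 := by
      intro i
      rw [norm_mul, norm_star]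
      nlinarith [sq_nonneg (‖P i (e1 l)‖ - ‖Q i (e2 l)‖)]
    calc ∑ i : Fin r, ‖P i (e1 l) * star (Q i (e2 l))‖
        ≤ ∑ i : Fin r, (‖P i (e1 l)‖ * ‖P i (e1 l)‖
            + ‖Q i (e2 l)‖ * ‖Q i (e2 l)‖) / 2 := Finset.sum_le_sum fun i _ => hterm i
      _ = t l := by
          rw [ht, ← Finset.sum_div, Finset.sum_add_distrib]
  refine hnorm.trans ?_
  have hPsum : ∑ l : Fin (min M N), ∑ i, ‖P i (e1 l)‖ * ‖P i (e1 l)‖ ≤ (r : ℝ) := by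
    rw [← total_bound P hPP]
    calc ∑ l : Fin (min M N), ∑ i, ‖P i (e1 l)‖ * ‖P i (e1 l)‖
        = ∑ j ∈ Finset.univ.image e1, ∑ i, ‖P i j‖ * ‖P i j‖ :=
          (Finset.sum_image (s := Finset.univ) (f := fun j => ∑ i, ‖P i j‖ * ‖P i j‖)
            (g := e1) fun x _ y _ hxy => Fin.castLE_injective hKM hxy).symm
      _ ≤ ∑ j, ∑ i, ‖P i j‖ * ‖P i j‖ := by
          refine Finset.sum_le_sum_of_subset_of_nonneg (Finset.subset_univ _) ?_
          intro j _ _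
          exact Finset.sum_nonneg fun i _ => mul_nonneg (norm_nonneg _) (norm_nonneg _)
  have hQsum : ∑ l : Fin (min M N), ∑ i, ‖Q i (e2 l)‖ * ‖Q i (e2 l)‖ ≤ (r : ℝ) := by
    rw [← total_bound Q hQQ]
    calc ∑ l : Fin (min M N), ∑ i, ‖Q i (e2 l)‖ * ‖Q i (e2 l)‖
        = ∑ j ∈ Finset.univ.image e2, ∑ i, ‖Q i j‖ * ‖Q i j‖ :=
          (Finset.sum_image (s := Finset.univ) (f := fun j => ∑ i, ‖Q i j‖ * ‖Q i j‖)
            (g := e2) fun x _ y _ hxy => Fin.castLE_injective hKN hxy).symm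
      _ ≤ ∑ j, ∑ i, ‖Q i j‖ * ‖Q i j‖ := by
          refine Finset.sum_le_sum_of_subset_of_nonneg (Finset.subset_univ _) ?_
          intro j _ _
          exact Finset.sum_nonneg fun i _ => mul_nonneg (norm_nonneg _) (norm_nonneg _)
  refine abel_bound hr σ t hσa hσ0 ?_ ?_ ?_
  · intro l
    rw [ht]
    have h1 : 0 ≤ ∑ i, ‖P i (e1 l)‖ * ‖P i (e1 l)‖ :=
      Finset.sum_nonneg fun i _ => mul_nonneg (norm_nonneg _) (norm_nonneg _)
    have h2 : 0 ≤ ∑ i, ‖Q i (e2 l)‖ * ‖Q i (e2 l)‖ :=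
      Finset.sum_nonneg fun i _ => mul_nonneg (norm_nonneg _) (norm_nonneg _)
    linarith
  · intro l
    rw [ht]
    have h1 := col_bound P hPP (e1 l)
    have h2 := col_bound Q hQQ (e2 l)
    linarith
  · have : ∑ l, t l = ((∑ l : Fin (min M N), ∑ i, ‖P i (e1 l)‖ * ‖P i (e1 l)‖)
        + ∑ l : Fin (min M N), ∑ i, ‖Q i (e2 l)‖ * ‖Q i (e2 l)‖) / 2 := by
      rw [ht, ← Finset.sum_div, Finset.sum_add_distrib]
    rw [this]
    linarith
end
end

section
/- Let x, y : Fin r → ℝ be nonincreasing functions with x i ≥ 0 and y i ≥ 0 for all i. Then the partial-sum inequalities Σ_{i=1}^{k} x i ≤ Σ_{i=1}^{k} y i hold for every k with 1 ≤ k ≤ r if and only if there exists a doubly stochastic matrix S ∈ ℝ^{r×r} such that the entrywise inequalities x i ≤ (S.mulVec y) i hold for every i. -/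
/-!
Doubly stochastic matrices can only lower prefix sums of an antitone `y`: the first `k` rows of
`S` weight the `y j` by `c j ∈ [0, 1]` with `∑ c j = k`, and no such weighting beats the `k`
largest entries. Conversely, induct on `r` as in the Hardy–Littlewood–Pólya theorem: if `k` is the
first index with `y k < x 0`, a convex combination of the identity and the transposition `(0 k)`
moves `y` to a vector with head `x 0` whose tail still dominates the tail of `x` in prefix sums,
and the doubly stochastic matrix obtained for the tails extends by a `1` in the corner.
-/

open Finset Matrix

section PrefixSum

variable {M : Type*} [AddCommMonoid M] {n : ℕ}

def prefixSum (f : Fin n → M) (k : ℕ) : M :=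
  ∑ i ∈ univ.filter (fun i : Fin n => (i : ℕ) < k), f i

lemma prefixSum_eq_sum_castLE (f : Fin n → M) {k : ℕ} (hk : k ≤ n) :
    prefixSum f k = ∑ i : Fin k, f (Fin.castLE hk i) := by
  have : univ.filter (fun i : Fin n => (i : ℕ) < k) = univ.map (Fin.castLEEmb hk) := by
    ext i
    simp only [mem_filter, mem_univ, true_and, mem_map, Fin.castLEEmb_apply]
    exact ⟨fun h => ⟨⟨i, h⟩, rfl⟩, by rintro ⟨j, rfl⟩; exact j.2⟩
  rw [prefixSum, this, sum_map]
  rfl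

@[simp]
lemma prefixSum_zero (f : Fin n → M) : prefixSum f 0 = 0 := by
  simp [prefixSum]

lemma prefixSum_succ (f : Fin (n + 1) → M) (k : ℕ) :
    prefixSum f (k + 1) = f 0 + prefixSum (fun i => f i.succ) k := by
  simp [prefixSum, sum_filter, Fin.sum_univ_succ]

lemma prefixSum_add (f g : Fin n → M) (k : ℕ) :
    prefixSum (f + g) k = prefixSum f k + prefixSum g k :=
  sum_add_distrib

lemma prefixSum_smul {R : Type*} [Monoid R] [DistribMulAction R M]
    (a : R) (f : Fin n → M) (k : ℕ) : prefixSum (a • f) k = a • prefixSum f k :=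
  (smul_sum ..).symm

lemma prefixSum_comp_perm (f : Fin n → M) {k : ℕ} {σ : Equiv.Perm (Fin n)}
    (hσ : ∀ i, (σ i : ℕ) < k ↔ (i : ℕ) < k) : prefixSum (f ∘ σ) k = prefixSum f k := by
  simp only [prefixSum, sum_filter, Function.comp_apply]
  rw [← Equiv.sum_comp σ (fun i : Fin n => if (i : ℕ) < k then f i else 0)]
  simp only [hσ]

lemma prefixSum_mono [PartialOrder M] [IsOrderedAddMonoid M] {f g : Fin n → M} {k : ℕ}
    (h : ∀ i : Fin n, (i : ℕ) < k → f i ≤ g i) : prefixSum f k ≤ prefixSum g k :=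
  sum_le_sum fun i hi => h i (mem_filter.1 hi).2

end PrefixSum

lemma Antitone.exists_separating_value {α : Type*} [Preorder α] [Nonempty α] {n : ℕ}
    {y : Fin n → α} (hy : Antitone y) (k : ℕ) :
    ∃ t, (∀ i : Fin n, (i : ℕ) < k → t ≤ y i) ∧ ∀ i : Fin n, k ≤ i → y i ≤ t := by
  by_cases hk : k < n
  · exact ⟨y ⟨k, hk⟩, fun i hi => hy (Fin.mk_le_of_le_val hi.le),
      fun i hi => hy (Fin.le_def.2 hi)⟩
  · rcases n with _ | n
    · exact ⟨Classical.arbitrary α, fun i => i.elim0, fun i => i.elim0⟩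
    · exact ⟨y (Fin.last n), fun i _ => hy (Fin.le_last i), fun i hi => absurd i.2 (by omega)⟩

section Weights

variable {R : Type*} [CommRing R] [LinearOrder R] [IsStrictOrderedRing R] {n : ℕ}

lemma sum_mul_le_prefixSum {y c : Fin n → R} (hy : Antitone y) (hc₀ : ∀ i, 0 ≤ c i)
    (hc₁ : ∀ i, c i ≤ 1) {k : ℕ} (hc : ∑ i, c i = k) : ∑ i, c i * y i ≤ prefixSum y k := by
  have hkn : k ≤ n := by
    have : (k : R) ≤ n := hc ▸ (sum_le_sum fun i _ => hc₁ i).trans_eq (by simp)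
    exact_mod_cast this
  set e : Fin n → R := fun i => if (i : ℕ) < k then 1 else 0
  have he : ∑ i, e i = k := by
    simp [e, sum_boole, Fin.card_filter_val_lt, hkn]
  obtain ⟨t, ht_lt, ht_ge⟩ := hy.exists_separating_value k
  have hprefix : prefixSum y k = ∑ i, e i * y i := by simp [prefixSum, sum_filter, e]
  -- subtracting `t` from `y` lowers both sides by `k * t`; afterwards each term compares
  have hdiff : ∑ i, c i * y i - prefixSum y k = ∑ i, (c i - e i) * (y i - t) := by
    rw [hprefix, ← sum_sub_distrib]
    simp only [sub_mul, mul_sub, sum_sub_distrib, ← sum_mul, hc, he]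
    ring
  have : ∑ i, (c i - e i) * (y i - t) ≤ 0 := by
    refine sum_nonpos fun i _ => ?_
    by_cases hi : (i : ℕ) < k
    · simp only [e, if_pos hi]
      exact mul_nonpos_of_nonpos_of_nonneg (by linarith [hc₁ i]) (by linarith [ht_lt i hi])
    · simp only [e, if_neg hi, sub_zero]
      exact mul_nonpos_of_nonneg_of_nonpos (hc₀ i) (by linarith [ht_ge i (not_lt.1 hi)])
  linarith

lemma prefixSum_mulVec_le {S : Matrix (Fin n) (Fin n) R} (hS : S ∈ doublyStochastic R (Fin n))
    {y : Fin n → R} (hy : Antitone y) {k : ℕ} (hk : k ≤ n) :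
    prefixSum (S *ᵥ y) k ≤ prefixSum y k := by
  set c : Fin n → R := fun j => prefixSum (fun i => S i j) k
  have hSy : prefixSum (S *ᵥ y) k = ∑ j, c j * y j := by
    simp only [prefixSum, mulVec, dotProduct, c, sum_mul]
    exact sum_comm
  have hc : ∑ j, c j = k := by
    simp only [c, prefixSum]
    rw [sum_comm, sum_congr rfl fun i _ => sum_row_of_mem_doublyStochastic hS i]
    simp [Fin.card_filter_val_lt, hk]
  rw [hSy]
  refine sum_mul_le_prefixSum hy (fun j => sum_nonneg fun i _ => nonneg_of_mem_doublyStochastic hS)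
    (fun j => ?_) hc
  calc c j ≤ ∑ i, S i j := sum_le_sum_of_subset_of_nonneg (subset_univ _) fun i _ _ =>
        nonneg_of_mem_doublyStochastic hS
    _ = 1 := sum_col_of_mem_doublyStochastic hS j

end Weights

section BlockDiagOne

variable {R : Type*} [Semiring R] {n : ℕ}

def blockDiagOne (M : Matrix (Fin n) (Fin n) R) : Matrix (Fin (n + 1)) (Fin (n + 1)) R :=
  Matrix.of (Fin.cons (Pi.single 0 1) fun i => Fin.cons 0 (M i))

lemma blockDiagOne_mulVec_zero (M : Matrix (Fin n) (Fin n) R) (v : Fin (n + 1) → R) :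
    (blockDiagOne M *ᵥ v) 0 = v 0 := by
  simp [blockDiagOne, mulVec]

lemma blockDiagOne_mulVec_succ (M : Matrix (Fin n) (Fin n) R) (v : Fin (n + 1) → R) (i : Fin n) :
    (blockDiagOne M *ᵥ v) i.succ = (M *ᵥ fun j => v j.succ) i := by
  simp [blockDiagOne, mulVec, dotProduct, Fin.sum_univ_succ]

lemma blockDiagOne_mem_doublyStochastic [PartialOrder R] [IsOrderedRing R]
    {M : Matrix (Fin n) (Fin n) R} (hM : M ∈ doublyStochastic R (Fin n)) :
    blockDiagOne M ∈ doublyStochastic R (Fin (n + 1)) := by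
  refine mem_doublyStochastic_iff_sum.2 ⟨fun i j => ?_, fun i => ?_, fun j => ?_⟩
  · cases i using Fin.cases <;> cases j using Fin.cases <;>
      simp [blockDiagOne, nonneg_of_mem_doublyStochastic hM]
  · cases i using Fin.cases <;> simp [blockDiagOne, sum_row_of_mem_doublyStochastic hM]
  · cases j using Fin.cases <;>
      simp [blockDiagOne, Fin.sum_univ_succ, sum_col_of_mem_doublyStochastic hM]

end BlockDiagOne

section Construction

variable {R : Type*} [Field R] [LinearOrder R] [IsStrictOrderedRing R] {n : ℕ}

lemma exists_mem_doublyStochastic_mulVec_zero_eq_of_lt {z y : Fin (n + 1) → R} (hz : Antitone z)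
    (h : ∀ m ≤ n + 1, prefixSum z m ≤ prefixSum y m) {k : Fin (n + 1)} (hk : y k < z 0)
    (hlt : ∀ i < k, z 0 ≤ y i) :
    ∃ T ∈ doublyStochastic R (Fin (n + 1)),
      (T *ᵥ y) 0 = z 0 ∧ ∀ m ≤ n + 1, prefixSum z m ≤ prefixSum (T *ᵥ y) m := by
  have hz0 : z 0 ≤ y 0 := by simpa [prefixSum_succ] using h 1 (by omega)
  obtain ⟨a, b, ha, hb, hab, hmix⟩ : z 0 ∈ segment R (y k) (y 0) := by
    rw [segment_eq_Icc (hk.le.trans hz0)]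
    exact ⟨hk.le, hz0⟩
  set T := a • (Equiv.swap 0 k).permMatrix R + b • (1 : Matrix (Fin (n + 1)) (Fin (n + 1)) R)
  have hTy : T *ᵥ y = a • (y ∘ Equiv.swap 0 k) + b • y := by
    simp only [T, add_mulVec, smul_mulVec, permMatrix_mulVec, one_mulVec]
  have hT0 : (T *ᵥ y) 0 = z 0 := by simpa [hTy] using hmix
  refine ⟨T, convex_doublyStochastic permMatrix_mem_doublyStochastic (one_mem _) ha hb hab, hT0,
    fun m hm => ?_⟩
  rcases le_or_gt m k with hmk | hkm
  · -- below `k` the new vector is still `≥ z 0`, which dominates `z` termwise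
    refine prefixSum_mono fun i hi => (hz (Fin.zero_le i)).trans ?_
    rcases eq_or_ne i 0 with rfl | hi0
    · exact hT0.ge
    · have hik : i < k := Fin.lt_def.2 (by omega)
      have : (T *ᵥ y) i = y i := by
        simp [hTy, Equiv.swap_apply_of_ne_of_ne hi0 hik.ne, ← add_mul, hab]
      exact this ▸ hlt i hik
  · have hswap : ∀ i, ((Equiv.swap 0 k i : Fin (n + 1)) : ℕ) < m ↔ (i : ℕ) < m := by
      intro i
      rcases eq_or_ne i 0 with rfl | hi0
      · simp only [Equiv.swap_apply_left, Fin.coe_ofNat_eq_mod, Nat.zero_mod]; omega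
      rcases eq_or_ne i k with rfl | hik
      · simp only [Equiv.swap_apply_right, Fin.coe_ofNat_eq_mod, Nat.zero_mod]; omega
      · rw [Equiv.swap_apply_of_ne_of_ne hi0 hik]
    calc prefixSum z m ≤ prefixSum y m := h m hm
      _ = prefixSum (T *ᵥ y) m := by
        rw [hTy, prefixSum_add, prefixSum_smul, prefixSum_smul, prefixSum_comp_perm y hswap,
          smul_eq_mul, smul_eq_mul, ← add_mul, hab, one_mul]

lemma exists_mem_doublyStochastic_head_tail {z y : Fin (n + 1) → R} (hz : Antitone z)
    (h : ∀ m ≤ n + 1, prefixSum z m ≤ prefixSum y m) :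
    ∃ T ∈ doublyStochastic R (Fin (n + 1)), z 0 ≤ (T *ᵥ y) 0 ∧
      ∀ m ≤ n, prefixSum (fun i => z i.succ) m ≤ prefixSum (fun i => (T *ᵥ y) i.succ) m := by
  by_cases hzy : ∀ i, z 0 ≤ y i
  · refine ⟨1, one_mem _, by simpa using hzy 0, fun m _ => prefixSum_mono fun i _ => ?_⟩
    simpa using (hz (Fin.zero_le _)).trans (hzy i.succ)
  push Not at hzy
  obtain ⟨k, hk, hmin⟩ := exists_minimal_of_wellFoundedLT _ hzy
  obtain ⟨T, hT, hT0, hTz⟩ := exists_mem_doublyStochastic_mulVec_zero_eq_of_lt hz h hk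
    fun i hik => not_lt.1 fun hi => (hmin hi hik.le).not_gt hik
  refine ⟨T, hT, hT0.ge, fun m hm => ?_⟩
  have := hTz (m + 1) (by omega)
  rw [prefixSum_succ, prefixSum_succ, hT0] at this
  exact le_of_add_le_add_left this

theorem exists_mem_doublyStochastic_le_mulVec_of_prefixSum_le :
    ∀ {n : ℕ} {z y : Fin n → R}, Antitone z → (∀ k ≤ n, prefixSum z k ≤ prefixSum y k) →
      ∃ S ∈ doublyStochastic R (Fin n), ∀ i, z i ≤ (S *ᵥ y) i
  | 0, _, _, _, _ => ⟨1, one_mem _, fun i => i.elim0⟩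
  | n + 1, z, y, hz, h => by
    obtain ⟨T, hT, hT0, htail⟩ := exists_mem_doublyStochastic_head_tail hz h
    obtain ⟨S, hS, hzS⟩ := exists_mem_doublyStochastic_le_mulVec_of_prefixSum_le
      (hz.comp_monotone Fin.strictMono_succ.monotone) htail
    refine ⟨blockDiagOne S * T, mul_mem (blockDiagOne_mem_doublyStochastic hS) hT, fun i => ?_⟩
    rw [← mulVec_mulVec]
    cases i using Fin.cases with
    | zero => rwa [blockDiagOne_mulVec_zero]
    | succ i => rw [blockDiagOne_mulVec_succ]; exact hzS i

end Construction

theorem weak_majorization_iff_doublyStochastic_general {r : ℕ} (x y : Fin r → ℝ)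
    (hx : Antitone x) (hy : Antitone y) :
    (∀ (k : ℕ) (_ : 1 ≤ k) (hk : k ≤ r),
        ∑ i : Fin k, x (Fin.castLE hk i) ≤ ∑ i : Fin k, y (Fin.castLE hk i)) ↔
      ∃ S ∈ doublyStochastic ℝ (Fin r), ∀ i, x i ≤ S.mulVec y i := by
  simp only [← prefixSum_eq_sum_castLE]
  constructor
  · intro h
    refine exists_mem_doublyStochastic_le_mulVec_of_prefixSum_le hx fun k hk => ?_
    rcases Nat.eq_zero_or_pos k with rfl | hk₁
    · simp
    · exact h k hk₁ hk
  · rintro ⟨S, hS, hxS⟩ k - hk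
    exact (prefixSum_mono fun i _ => hxS i).trans (prefixSum_mulVec_le hS hy hk)

/-- Weak majorization characterization (Horn–Johnson, Corollary 3.2.11): for nonincreasing
nonnegative `x, y : Fin r → ℝ`, the partial sums of `x` are dominated by those of `y` for
every `1 ≤ k ≤ r` iff `x ≤ S.mulVec y` entrywise for some doubly stochastic `S`. -/
theorem weak_majorization_iff_doublyStochastic {r : ℕ} (x y : Fin r → ℝ)
    (hx : Antitone x) (hy : Antitone y)
    (hx0 : ∀ i, 0 ≤ x i) (hy0 : ∀ i, 0 ≤ y i) :
    (∀ (k : ℕ) (_ : 1 ≤ k) (hk : k ≤ r),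
        ∑ i : Fin k, x (Fin.castLE hk i) ≤ ∑ i : Fin k, y (Fin.castLE hk i)) ↔
      ∃ S ∈ doublyStochastic ℝ (Fin r), ∀ i, x i ≤ S.mulVec y i :=
  weak_majorization_iff_doublyStochastic_general x y hx hy
end

section
/- Let U ∈ ℍ^{M×M} and V ∈ ℍ^{N×N} be unitary quaternion matrices, let x, y : Fin (min M N) → ℝ, and let D_x, D_y ∈ ℍ^{M×N} be the rectangular diagonal matrices of x and y respectively. If X = U * D_x * Vᴴ and Y = U * D_y * Vᴴ (i.e. X and Y share the same left and right singular vectors), then tr(Yᴴ * X) = ((Σ_{i=1}^{min(M,N)} (x i)·(y i) : ℝ) : ℍ); in particular the von Neumann trace bound Σ_i (x i)·(y i) is attained. -/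
noncomputable section

open Matrix

/-- The von Neumann trace bound is attained when `X` and `Y` share left and right
singular vectors: then `tr(Yᴴ * X) = ∑ᵢ xᵢ yᵢ` (as a real quaternion). -/
theorem quaternion_von_neumann_trace_attained {M N : ℕ}
    (U : Matrix (Fin M) (Fin M) ℍ) (V : Matrix (Fin N) (Fin N) ℍ)
    (hU : IsUnitary U) (hV : IsUnitary V)
    (x y : Fin (min M N) → ℝ)
    (X Y : Matrix (Fin M) (Fin N) ℍ)
    (hX : X = U * rectDiag M N x * Vᴴ) (hY : Y = U * rectDiag M N y * Vᴴ) :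
    Matrix.trace (Yᴴ * X) = ((∑ i, x i * y i : ℝ) : ℍ) := by
  subst hX hY
  have h1 : (U * rectDiag M N y * Vᴴ)ᴴ * (U * rectDiag M N x * Vᴴ)
      = V * ((rectDiag M N y)ᴴ * rectDiag M N x) * Vᴴ := by
    simp only [conjTranspose_mul, conjTranspose_conjTranspose, ← Matrix.mul_assoc]
    rw [Matrix.mul_assoc (V * (rectDiag M N y)ᴴ) Uᴴ U, hU.2, Matrix.mul_one]
  rw [h1]
  -- compute the middle product
  have h2 : (rectDiag M N y)ᴴ * rectDiag M N x
      = rectDiag N N (fun i : Fin (min M N) => x i * y i) := by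
    refine Matrix.ext fun j k => ?_
    simp only [Matrix.mul_apply, conjTranspose_apply, rectDiag, Matrix.of_apply]
    rcases Decidable.em ((j : ℕ) = (k : ℕ) ∧ (j : ℕ) < min M N) with h | h
    · obtain ⟨hjk, hjK⟩ := h
      rw [dif_pos ⟨hjk, hjK⟩]
      have hjM : (j : ℕ) < M := lt_of_lt_of_le hjK (min_le_left _ _)
      rw [Finset.sum_eq_single (⟨(j : ℕ), hjM⟩ : Fin M)]
      · rw [dif_pos ⟨rfl, hjK⟩, dif_pos ⟨hjk, hjK⟩]
        rw [Quaternion.star_coe, ← Quaternion.coe_mul, mul_comm]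
      · intro b _ hb
        rcases Decidable.em ((b : ℕ) = (j : ℕ) ∧ (b : ℕ) < min M N) with hb2 | hb2
        · exact absurd (Fin.ext hb2.1) hb
        · rw [dif_neg hb2, star_zero, zero_mul]
      · intro hmem; exact absurd (Finset.mem_univ _) hmem
    · rw [dif_neg h]
      apply Finset.sum_eq_zero
      intro b _
      rcases Decidable.em ((b : ℕ) = (j : ℕ) ∧ (b : ℕ) < min M N) with hb | hb
      · have hbk : ¬((b : ℕ) = (k : ℕ) ∧ (b : ℕ) < min M N) := by
          rintro ⟨h1', _⟩
          exact h ⟨hb.1.symm.trans h1', hb.1 ▸ hb.2⟩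
        rw [dif_neg hbk, mul_zero]
      · rw [dif_neg hb, star_zero, zero_mul]
  rw [h2]
  -- trace computation
  have hVV := hV.2
  set d : Fin (min M N) → ℝ := fun i => x i * y i with hd
  have h3 : Matrix.trace (V * rectDiag N N d * Vᴴ) = ((∑ i, d i : ℝ) : ℍ) := by
    unfold Matrix.trace
    simp only [diag_apply, Matrix.mul_apply, conjTranspose_apply, rectDiag, Matrix.of_apply]
    have key : ∀ j : Fin N, ∑ a : Fin N, (∑ b : Fin N, V j b *
        (if h : (b : ℕ) = (a : ℕ) ∧ (b : ℕ) < min M N then ((d ⟨b, h.2⟩ : ℝ) : ℍ) else 0))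
          * star (V j a)
        = ∑ a : Fin N, (if h : (a : ℕ) < min M N then ((d ⟨a, h⟩ : ℝ) : ℍ) else 0)
          * (V j a * star (V j a)) := by
      intro j
      refine Finset.sum_congr rfl fun a _ => ?_
      rw [Finset.sum_eq_single a]
      · rcases Decidable.em ((a : ℕ) < min M N) with ha | ha
        · rw [dif_pos ⟨rfl, ha⟩, dif_pos ha, ← mul_assoc]
          congr 1
          exact (Quaternion.coe_commutes _ _).symm
        · rw [dif_neg (fun h' => ha h'.2), dif_neg ha]
          simp
      · intro b _ hb
        rw [dif_neg (fun h' => hb (Fin.ext h'.1)), mul_zero]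
      · intro hmem; exact absurd (Finset.mem_univ _) hmem
    calc ∑ j : Fin N, ∑ a : Fin N, (∑ b : Fin N, V j b *
          (if h : (b : ℕ) = (a : ℕ) ∧ (b : ℕ) < min M N then ((d ⟨b, h.2⟩ : ℝ) : ℍ) else 0))
            * star (V j a)
        = ∑ j : Fin N, ∑ a : Fin N,
            (if h : (a : ℕ) < min M N then ((d ⟨a, h⟩ : ℝ) : ℍ) else 0)
            * (V j a * star (V j a)) := Finset.sum_congr rfl fun j _ => key j
      _ = ∑ a : Fin N, (if h : (a : ℕ) < min M N then ((d ⟨a, h⟩ : ℝ) : ℍ) else 0)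
            * (∑ j : Fin N, star (V j a) * V j a) := by
          rw [Finset.sum_comm]
          refine Finset.sum_congr rfl fun a _ => ?_
          rw [← Finset.mul_sum]
          congr 1
          refine Finset.sum_congr rfl fun j _ => ?_
          rw [Quaternion.self_mul_star, Quaternion.star_mul_self]
      _ = ∑ a : Fin N, (if h : (a : ℕ) < min M N then ((d ⟨a, h⟩ : ℝ) : ℍ) else 0) := by
          refine Finset.sum_congr rfl fun a _ => ?_
          have : ∑ j : Fin N, star (V j a) * V j a = (Vᴴ * V) a a := by
            simp [Matrix.mul_apply, conjTranspose_apply]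
          rw [this, hVV, Matrix.one_apply_eq, mul_one]
      _ = ((∑ i, d i : ℝ) : ℍ) := by
          have hKN : min M N ≤ N := min_le_right _ _
          rw [Fin.sum_univ_eq_sum_range
            (fun n => if h : n < min M N then ((d ⟨n, h⟩ : ℝ) : ℍ) else 0)]
          rw [← Finset.sum_subset (Finset.range_subset_range.mpr hKN)
            (fun n _ hn => dif_neg (by simpa using hn))]
          rw [← Fin.sum_univ_eq_sum_range
            (fun n => if h : n < min M N then ((d ⟨n, h⟩ : ℝ) : ℍ) else 0)]
          simp only [Fin.is_lt, dif_pos, Fin.eta]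
          exact (map_sum (algebraMap ℝ ℍ) d Finset.univ).symm
  rw [h3]
end
end

section
/- Let U, V ∈ ℍ^{r×M} be quaternion matrices satisfying U * Uᴴ = I_r and V * Vᴴ = I_r. Then the real matrix P ∈ ℝ^{r×M} with entries P i j = ‖U i j‖·‖V i j‖ is doubly substochastic: for every row index i, Σ_{j=1}^{M} ‖U i j‖·‖V i j‖ ≤ 1, and for every column index j, Σ_{i=1}^{r} ‖U i j‖·‖V i j‖ ≤ 1. -/
noncomputable section

open Matrix

lemma qcoe_sum {α : Type*} (s : Finset α) (f : α → ℝ) :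
    ((∑ a ∈ s, f a : ℝ) : ℍ) = ∑ a ∈ s, ((f a : ℝ) : ℍ) := by
  induction s using Finset.cons_induction with
  | empty => simp
  | cons a s ha ih => simp [Finset.sum_cons, ih]

lemma rowsum_sq_eq_one {r M : ℕ} (U : Matrix (Fin r) (Fin M) ℍ)
    (hU : U * Uᴴ = 1) (i : Fin r) : ∑ j, ‖U i j‖ ^ 2 = 1 := by
  have h := congrFun (congrFun hU i) i
  have h1 : ∑ j, ((Quaternion.normSq (U i j) : ℝ) : ℍ) = ((1 : ℝ) : ℍ) := by
    simpa [Matrix.mul_apply, Matrix.conjTranspose_apply,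
      Quaternion.self_mul_star, Matrix.one_apply_eq] using h
  have h2 : ((∑ j, ‖U i j‖ ^ 2 : ℝ) : ℍ) = ((1 : ℝ) : ℍ) := by
    rw [qcoe_sum]
    rw [← h1]
    refine Finset.sum_congr rfl fun j _ => ?_
    rw [Quaternion.normSq_eq_norm_mul_self, sq]
  exact Quaternion.coe_injective h2

lemma colsum_sq_le_one {r M : ℕ} (U : Matrix (Fin r) (Fin M) ℍ)
    (hU : U * Uᴴ = 1) (j : Fin M) : ∑ i, ‖U i j‖ ^ 2 ≤ 1 := by
  set P := Uᴴ * U with hPdef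
  have hP : P * P = P := by
    rw [hPdef, Matrix.mul_assoc, ← Matrix.mul_assoc U, hU, Matrix.one_mul]
  have hH : Pᴴ = P := by simp [hPdef, Matrix.conjTranspose_mul]
  set s : ℝ := ∑ i, ‖U i j‖ ^ 2 with hs
  have hs0 : 0 ≤ s := Finset.sum_nonneg fun i _ => sq_nonneg _
  have hdiag : P j j = (s : ℍ) := by
    have h1 : P j j = ∑ i, ((Quaternion.normSq (U i j) : ℝ) : ℍ) := by
      simp [hPdef, Matrix.mul_apply, Matrix.conjTranspose_apply,
        Quaternion.star_mul_self]
    rw [h1, hs, qcoe_sum]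
    refine Finset.sum_congr rfl fun i _ => ?_
    rw [Quaternion.normSq_eq_norm_mul_self, sq]
  have key : ∑ k, Quaternion.normSq (P j k) = s := by
    have h1 : P j j = ∑ k, ((Quaternion.normSq (P j k) : ℝ) : ℍ) := by
      conv_lhs => rw [← hP]
      rw [Matrix.mul_apply]
      refine Finset.sum_congr rfl fun k _ => ?_
      have hkj : P k j = star (P j k) := by
        conv_lhs => rw [← hH]
        simp [Matrix.conjTranspose_apply]
      rw [hkj, Quaternion.self_mul_star]
    rw [hdiag, ← qcoe_sum] at h1
    exact (Quaternion.coe_injective h1).symm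
  have hterm : Quaternion.normSq (P j j) ≤ ∑ k, Quaternion.normSq (P j k) :=
    Finset.single_le_sum (f := fun k => Quaternion.normSq (P j k)) (fun k _ => Quaternion.normSq_nonneg) (Finset.mem_univ j)
  rw [key, hdiag, Quaternion.normSq_coe] at hterm
  nlinarith

/-- For row-orthonormal quaternion matrices `U, V : ℍ^{r×M}`, the real matrix with
entries `‖U i j‖ ‖V i j‖` is doubly substochastic. -/
theorem doubly_substochastic_of_semi_unitary {r M : ℕ}
    (U V : Matrix (Fin r) (Fin M) ℍ)
    (hU : U * Uᴴ = 1) (hV : V * Vᴴ = 1) :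
    (∀ i : Fin r, ∑ j : Fin M, ‖U i j‖ * ‖V i j‖ ≤ 1) ∧
      ∀ j : Fin M, ∑ i : Fin r, ‖U i j‖ * ‖V i j‖ ≤ 1 := by
  constructor
  · intro i
    have h1 := rowsum_sq_eq_one U hU i
    have h2 := rowsum_sq_eq_one V hV i
    have h3 : ∑ j, ‖U i j‖ * ‖V i j‖ ≤ ∑ j, (‖U i j‖ ^ 2 + ‖V i j‖ ^ 2) / 2 := by
      refine Finset.sum_le_sum fun j _ => ?_
      nlinarith [sq_nonneg (‖U i j‖ - ‖V i j‖)]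
    rw [← Finset.sum_div, Finset.sum_add_distrib, h1, h2] at h3
    linarith
  · intro j
    have h1 := colsum_sq_le_one U hU j
    have h2 := colsum_sq_le_one V hV j
    have h3 : ∑ i, ‖U i j‖ * ‖V i j‖ ≤ ∑ i, (‖U i j‖ ^ 2 + ‖V i j‖ ^ 2) / 2 := by
      refine Finset.sum_le_sum fun i _ => ?_
      nlinarith [sq_nonneg (‖U i j‖ - ‖V i j‖)]
    rw [← Finset.sum_div, Finset.sum_add_distrib] at h3
    linarith
end
end

section
/- Let r ≤ M, let P : Fin r → Fin M → ℝ have nonnegative entries with every row sum at most 1 (Σ_j P i j ≤ 1 for each i) and every column sum at most 1 (Σ_i P i j ≤ 1 for each j), and let σ : Fin M → ℝ be nonincreasing with σ j ≥ 0 for all j. Then Σ_{i=1}^{r} Σ_{j=1}^{M} (P i j)·(σ j) ≤ Σ_{j=1}^{r} σ j, i.e. the weighted sum is bounded by the sum of the r largest values of σ. -/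
noncomputable section

/-- A doubly substochastic weighting of a nonincreasing nonnegative vector is bounded by
the sum of its `r` largest values. -/
theorem substochastic_sum_le {r M : ℕ} (hr : r ≤ M)
    (P : Fin r → Fin M → ℝ)
    (hP0 : ∀ i j, 0 ≤ P i j)
    (hProw : ∀ i, ∑ j, P i j ≤ 1)
    (hPcol : ∀ j, ∑ i, P i j ≤ 1)
    (σ : Fin M → ℝ) (hσ : Antitone σ) (hσ0 : ∀ j, 0 ≤ σ j) :
    ∑ i : Fin r, ∑ j : Fin M, P i j * σ j ≤ ∑ j : Fin r, σ (Fin.castLE hr j) := by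
  classical
  set τ : ℕ → ℝ := fun n => if h : n < M then σ ⟨n, h⟩ else 0 with hτ
  set Q : ℕ → ℕ → ℝ := fun i j =>
    if hi : i < r then if hj : j < M then P ⟨i, hi⟩ ⟨j, hj⟩ else 0 else 0 with hQ
  set d : ℕ → ℝ := fun k => τ k - τ (k + 1) with hd
  have hd0 : ∀ k, 0 ≤ d k := by
    intro k
    simp only [hd, hτ, sub_nonneg]
    split_ifs with h1 h2 h2
    · exact hσ (by simp [Fin.le_def])
    · omega
    · exact hσ0 _
    · exact le_refl 0
  have hQ0 : ∀ i j, 0 ≤ Q i j := by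
    intro i j
    simp only [hQ]
    split_ifs <;> first | exact hP0 _ _ | exact le_rfl
  -- telescoping
  have htel : ∀ j, j ≤ M → τ j = ∑ k ∈ Finset.Ico j M, d k := by
    intro j hj
    rw [Finset.sum_Ico_eq_sub d hj, Finset.sum_range_sub' τ, Finset.sum_range_sub' τ]
    have : τ M = 0 := by simp [hτ]
    rw [this]; ring
  -- filter identities
  have hIco : ∀ j : ℕ, (Finset.range M).filter (fun k => j ≤ k) = Finset.Ico j M := by
    intro j; ext k; simp [Finset.mem_filter, and_comm]
  have hfil : ∀ k : ℕ, k < M → (Finset.range M).filter (fun j => j ≤ k) = Finset.range (k + 1) := by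
    intro k hk; ext j; simp; omega
  -- swap lemma
  have hswap : ∀ (f : ℕ → ℕ → ℝ),
      ∑ j ∈ Finset.range M, ∑ k ∈ Finset.Ico j M, f j k
        = ∑ k ∈ Finset.range M, ∑ j ∈ Finset.range (k + 1), f j k := by
    intro f
    have h1 : ∀ j, ∑ k ∈ Finset.Ico j M, f j k
        = ∑ k ∈ Finset.range M, if j ≤ k then f j k else 0 := by
      intro j; rw [← hIco j, Finset.sum_filter]
    simp only [h1]
    rw [Finset.sum_comm]
    refine Finset.sum_congr rfl fun k hk => ?_
    rw [← Finset.sum_filter, hfil k (Finset.mem_range.mp hk)]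
  -- rewrite LHS
  have hL : (∑ i ∈ Finset.range r, ∑ j ∈ Finset.range M, Q i j * τ j)
      = ∑ i : Fin r, ∑ j : Fin M, P i j * σ j := by
    rw [← Fin.sum_univ_eq_sum_range]
    refine Finset.sum_congr rfl fun i _ => ?_
    rw [← Fin.sum_univ_eq_sum_range]
    refine Finset.sum_congr rfl fun j _ => ?_
    simp [hQ, hτ]
  -- rewrite RHS
  have hR : (∑ j ∈ Finset.range r, τ j) = ∑ j : Fin r, σ (Fin.castLE hr j) := by
    rw [← Fin.sum_univ_eq_sum_range]
    refine Finset.sum_congr rfl fun j _ => ?_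
    have hjM : (j : ℕ) < M := lt_of_lt_of_le j.isLt hr
    simp only [hτ, hjM, dif_pos]
    rfl
  rw [← hL, ← hR]
  -- expand via d
  have hLexp : (∑ i ∈ Finset.range r, ∑ j ∈ Finset.range M, Q i j * τ j)
      = ∑ k ∈ Finset.range M,
          (∑ i ∈ Finset.range r, ∑ j ∈ Finset.range (k + 1), Q i j) * d k := by
    have step1 : ∀ i, ∑ j ∈ Finset.range M, Q i j * τ j
        = ∑ k ∈ Finset.range M, (∑ j ∈ Finset.range (k + 1), Q i j) * d k := by
      intro i
      have : ∀ j ∈ Finset.range M, Q i j * τ j = ∑ k ∈ Finset.Ico j M, Q i j * d k := by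
        intro j hj
        rw [htel j (le_of_lt (Finset.mem_range.mp hj)), Finset.mul_sum]
      rw [Finset.sum_congr rfl this, hswap (fun j k => Q i j * d k)]
      exact Finset.sum_congr rfl fun k _ => (Finset.sum_mul _ _ _).symm
    rw [Finset.sum_congr rfl fun i _ => step1 i, Finset.sum_comm]
    exact Finset.sum_congr rfl fun k _ => (Finset.sum_mul _ _ _).symm
  have hRexp : (∑ j ∈ Finset.range r, τ j)
      = ∑ k ∈ Finset.range M, ((min r (k + 1) : ℕ) : ℝ) * d k := by
    have : ∀ j ∈ Finset.range r, τ j = ∑ k ∈ Finset.range M, if j ≤ k then d k else 0 := by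
      intro j hj
      rw [htel j (le_trans (le_of_lt (Finset.mem_range.mp hj)) hr), ← hIco j,
        Finset.sum_filter]
    rw [Finset.sum_congr rfl this, Finset.sum_comm]
    refine Finset.sum_congr rfl fun k _ => ?_
    rw [← Finset.sum_filter]
    have hcard : (Finset.range r).filter (fun j => j ≤ k) = Finset.range (min r (k + 1)) := by
      ext j; simp
    rw [hcard, Finset.sum_const, Finset.card_range, nsmul_eq_mul]
  rw [hLexp, hRexp]
  refine Finset.sum_le_sum fun k hk => ?_
  have hkM : k < M := Finset.mem_range.mp hk
  refine mul_le_mul_of_nonneg_right ?_ (hd0 k)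
  have hr' : (∑ i ∈ Finset.range r, ∑ j ∈ Finset.range (k + 1), Q i j) ≤ (r : ℝ) := by
    calc ∑ i ∈ Finset.range r, ∑ j ∈ Finset.range (k + 1), Q i j
        ≤ ∑ i ∈ Finset.range r, (1 : ℝ) := by
          refine Finset.sum_le_sum fun i hi => ?_
          have hir : i < r := Finset.mem_range.mp hi
          calc ∑ j ∈ Finset.range (k + 1), Q i j
              ≤ ∑ j ∈ Finset.range M, Q i j := by
                refine Finset.sum_le_sum_of_subset_of_nonneg
                  (Finset.range_subset_range.mpr hkM) fun j _ _ => hQ0 i j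
            _ = ∑ j : Fin M, P ⟨i, hir⟩ j := by
                rw [← Fin.sum_univ_eq_sum_range]
                exact Finset.sum_congr rfl fun j _ => by simp [hQ, hir]
            _ ≤ 1 := hProw _
      _ = (r : ℝ) := by simp
  have hc' : (∑ i ∈ Finset.range r, ∑ j ∈ Finset.range (k + 1), Q i j) ≤ ((k + 1 : ℕ) : ℝ) := by
    rw [Finset.sum_comm]
    calc ∑ j ∈ Finset.range (k + 1), ∑ i ∈ Finset.range r, Q i j
        ≤ ∑ j ∈ Finset.range (k + 1), (1 : ℝ) := by
          refine Finset.sum_le_sum fun j hj => ?_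
          have hjM : j < M := lt_of_lt_of_le (Finset.mem_range.mp hj) hkM
          calc ∑ i ∈ Finset.range r, Q i j
              = ∑ i : Fin r, P i ⟨j, hjM⟩ := by
                rw [← Fin.sum_univ_eq_sum_range]
                exact Finset.sum_congr rfl fun i _ => by simp [hQ, hjM]
            _ ≤ 1 := hPcol _
      _ = ((k + 1 : ℕ) : ℝ) := by simp
  have : ((min r (k + 1) : ℕ) : ℝ) = min (r : ℝ) ((k + 1 : ℕ) : ℝ) := by push_cast; simp
  rw [this]
  exact le_min hr' hc'
end
end

section
/- Let X ∈ ℍ^{M×N} admit a QSVD with singular values σ : Fin (min M N) → ℝ, and suppose X = U * Vᴴ for some quaternion matrices U ∈ ℍ^{M×d} and V ∈ ℍ^{N×d}. Then the quaternion nuclear norm of X is bounded by the bi-factor Frobenius surrogate: Σ_{i=1}^{min(M,N)} σ i ≤ ½·(Σ_{i,j} ‖U i j‖² + Σ_{i,j} ‖V i j‖²). -/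
/-! If `X = W D Qᴴ` is the QSVD, then `D = Wᴴ X Q = (Wᴴ U) (Qᴴ V)ᴴ`, so each singular value is
the real part of an inner product of a row of `Wᴴ U` with a row of `Qᴴ V`, hence at most half the
sum of their squared norms by Cauchy–Schwarz and AM–GM. Summing over the diagonal bounds `∑ σᵢ` by
half the squared Frobenius norms of `Wᴴ U` and `Qᴴ V`, which equal those of `U` and `V` since `W`
and `Q` are unitary. -/

noncomputable section

open Matrix

open Finset

lemma Fintype.sum_comp_embedding_le {ι κ : Type*} [Fintype ι] [Fintype κ] (e : ι ↪ κ)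
    {g : κ → ℝ} (hg : ∀ j, 0 ≤ g j) : ∑ i, g (e i) ≤ ∑ j, g j := by
  rw [← sum_map univ e g]
  exact sum_le_univ_sum_of_nonneg hg

namespace Quaternion

lemma re_sum_s18 {α : Type*} (s : Finset α) (f : α → ℍ) :
    (∑ x ∈ s, f x).re = ∑ x ∈ s, (f x).re :=
  map_sum (QuaternionAlgebra.reₗ _ _ _) f s

lemma re_mul_star_le (a b : ℍ) : (a * star b).re ≤ (‖a‖ ^ 2 + ‖b‖ ^ 2) / 2 := by
  rw [← inner_def]
  linarith [real_inner_le_norm a b, two_mul_le_add_sq ‖a‖ ‖b‖]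

lemma norm_sq_eq_re_star_mul_self (a : ℍ) : ‖a‖ ^ 2 = (star a * a).re := by
  rw [star_mul_self, re_coe, sq, normSq_eq_norm_mul_self]

end Quaternion

namespace Matrix

variable {m n k : Type*}

lemma sum_sq_norm_eq_re_trace [Fintype m] [Fintype n] (B : Matrix m n ℍ) :
    ∑ i, ∑ j, ‖B i j‖ ^ 2 = (Bᴴ * B).trace.re := by
  simp only [trace, diag_apply, mul_apply, conjTranspose_apply, Quaternion.re_sum_s18,
    Quaternion.norm_sq_eq_re_star_mul_self]
  exact sum_comm

lemma sum_sq_norm_conjTranspose_mul [Fintype m] [Fintype n] [DecidableEq m]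
    {W : Matrix m m ℍ} (hW : W * Wᴴ = 1) (A : Matrix m n ℍ) :
    ∑ i, ∑ j, ‖(Wᴴ * A) i j‖ ^ 2 = ∑ i, ∑ j, ‖A i j‖ ^ 2 := by
  rw [sum_sq_norm_eq_re_trace, sum_sq_norm_eq_re_trace, conjTranspose_mul,
    conjTranspose_conjTranspose, Matrix.mul_assoc, ← Matrix.mul_assoc W, hW, Matrix.one_mul]

lemma re_mul_conjTranspose_apply_le [Fintype k] (A : Matrix m k ℍ) (B : Matrix n k ℍ)
    (i : m) (j : n) :
    ((A * Bᴴ) i j).re ≤ (∑ l, ‖A i l‖ ^ 2 + ∑ l, ‖B j l‖ ^ 2) / 2 := by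
  simp only [mul_apply, conjTranspose_apply, Quaternion.re_sum_s18]
  rw [← sum_add_distrib, sum_div]
  exact sum_le_sum fun l _ => Quaternion.re_mul_star_le _ _

lemma sum_re_mul_conjTranspose_apply_le {ι : Type*} [Fintype ι] [Fintype m] [Fintype n]
    [Fintype k] (A : Matrix m k ℍ) (B : Matrix n k ℍ) (e : ι ↪ m) (f : ι ↪ n) :
    ∑ i, ((A * Bᴴ) (e i) (f i)).re ≤ (∑ i, ∑ l, ‖A i l‖ ^ 2 + ∑ j, ∑ l, ‖B j l‖ ^ 2) / 2 := by
  calc ∑ i, ((A * Bᴴ) (e i) (f i)).re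
      ≤ ∑ i, (∑ l, ‖A (e i) l‖ ^ 2 + ∑ l, ‖B (f i) l‖ ^ 2) / 2 :=
        sum_le_sum fun i _ => re_mul_conjTranspose_apply_le A B _ _
    _ = (∑ i, ∑ l, ‖A (e i) l‖ ^ 2 + ∑ i, ∑ l, ‖B (f i) l‖ ^ 2) / 2 := by
        rw [← sum_div, sum_add_distrib]
    _ ≤ _ := by
        gcongr
        · exact Fintype.sum_comp_embedding_le e (g := fun i => ∑ l, ‖A i l‖ ^ 2)
            fun _ => by positivity
        · exact Fintype.sum_comp_embedding_le f (g := fun j => ∑ l, ‖B j l‖ ^ 2)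
            fun _ => by positivity

end Matrix

lemma rectDiag_apply_castLE {M N K : ℕ} (σ : Fin K → ℝ) (hM : K ≤ M) (hN : K ≤ N) (i : Fin K) :
    rectDiag M N σ (Fin.castLE hM i) (Fin.castLE hN i) = (σ i : ℍ) :=
  dif_pos ⟨rfl, i.isLt⟩

lemma sum_le_of_rectDiag_eq_mul_conjTranspose {M N d : ℕ} {σ : Fin (min M N) → ℝ}
    {A : Matrix (Fin M) (Fin d) ℍ} {B : Matrix (Fin N) (Fin d) ℍ}
    (hD : rectDiag M N σ = A * Bᴴ) :
    ∑ i, σ i ≤ (∑ i, ∑ j, ‖A i j‖ ^ 2 + ∑ i, ∑ j, ‖B i j‖ ^ 2) / 2 := by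
  convert sum_re_mul_conjTranspose_apply_le A B (Fin.castLEEmb (min_le_left M N))
    (Fin.castLEEmb (min_le_right M N)) using 2 with i
  rw [Fin.castLEEmb_apply, Fin.castLEEmb_apply, ← hD, rectDiag_apply_castLE, Quaternion.re_coe]

lemma IsQSVD.rectDiag_eq {M N : ℕ} {A : Matrix (Fin M) (Fin N) ℍ} {U : Matrix (Fin M) (Fin M) ℍ}
    {σ : Fin (min M N) → ℝ} {V : Matrix (Fin N) (Fin N) ℍ} (h : IsQSVD A U σ V) :
    rectDiag M N σ = Uᴴ * A * V := by
  obtain ⟨hU, hV, -, -, rfl⟩ := h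
  rw [Matrix.mul_assoc U, ← Matrix.mul_assoc Uᴴ, hU.2, Matrix.one_mul, Matrix.mul_assoc, hV.2,
    Matrix.mul_one]

/-- The quaternion nuclear norm is bounded by the bi-factor Frobenius surrogate:
if `X = U * Vᴴ` then `∑ᵢ σᵢ(X) ≤ ½ (‖U‖_F² + ‖V‖_F²)`. -/
theorem qnn_le_bifactor_frobenius {M N d : ℕ} (X : Matrix (Fin M) (Fin N) ℍ)
    (σ : Fin (min M N) → ℝ) (hX : HasQSVD X σ)
    (U : Matrix (Fin M) (Fin d) ℍ) (V : Matrix (Fin N) (Fin d) ℍ)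
    (hUV : X = U * Vᴴ) :
    ∑ i, σ i ≤
      (1 / 2) * ((∑ i, ∑ j, ‖U i j‖ ^ 2) + ∑ i, ∑ j, ‖V i j‖ ^ 2) := by
  obtain ⟨W, Q, hsvd⟩ := hX
  have hD : rectDiag M N σ = (Wᴴ * U) * (Qᴴ * V)ᴴ := by
    rw [hsvd.rectDiag_eq, hUV, conjTranspose_mul, conjTranspose_conjTranspose]
    simp only [Matrix.mul_assoc]
  have hbound := sum_le_of_rectDiag_eq_mul_conjTranspose hD
  rw [sum_sq_norm_conjTranspose_mul hsvd.1.1, sum_sq_norm_conjTranspose_mul hsvd.2.1.1] at hbound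
  linarith
end
end
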